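/- arXiv:hep-th/9311152 — 8 statements merged into one kernel-verified Lean document; each statement's English description precedes it below -/
import Mathlib

section
/- Let W be a complex vector space and let A, B, C, D : ℂ → End(W) be a QISM I family on W. Let u₀ ∈ ℂ, let j₋, j₊ ∈ ℤ ∪ {−∞, +∞}, and set 𝒟 = {u₀ + m : m ∈ ℤ, j₋ < m < j₊}. Assume: (i) for every u ∈ 𝒟 the kernel {w ∈ W : C(u)w = 0} is one-dimensional; (ii) for every u ∈ 𝒟 and every nonzero w ∈ W with C(u)w = 0 one has A(u)w ≠ 0 if u ≠ u₀ + j₋ + 1 and A(u)w = 0 if u = u₀ + j₋ + 1, and D(u)w ≠ 0 if u ≠ u₀ + j₊ − 1 and D(u)w = 0 if u = u₀ + j₊ − 1. For each u ∈ 𝒟 choose a nonzero F(u) ∈ W with C(u)F(u) = 0. Then there exist scalar functions Δ₋, Δ₊ : ℂ → ℂ such that A(u)F(u) = Δ₋(u − 1/2) F(u−1) for all u ∈ 𝒟 with u ≠ u₀ + j₋ + 1, and D(u)F(u) = Δ₊(u + 1/2) F(u+1) for all u ∈ 𝒟 with u ≠ u₀ + j₊ − 1. Moreover, for every u ∈ (𝒟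 + 1/2) ∪ (𝒟 − 1/2) the quantum determinant Δ(u) = A(u−1/2)D(u+1/2) − C(u−1/2)B(u+1/2) acts on the span of {F(v) : v ∈ 𝒟} as multiplication by a scalar c(u), where c(u) = Δ₊(u)Δ₋(u) if u ∉ {u₀ + j₊ − 1/2, u₀ + j₋ + 1/2}, and c(u) = 0 if u ∈ {u₀ + j₊ − 1/2, u₀ + j₋ + 1/2}. -/
/-- Coercion of an integer into the extended reals. -/
noncomputable def intToE (m : ℤ) : EReal := ((m : ℝ) : EReal)

/-- A QISM I family on a complex vector space W: operators A, B, C, D : ℂ → End(W)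
satisfying the sixteen commutation relations obtained from
R(u−v)T⁽¹⁾(u)T⁽²⁾(v) = T⁽²⁾(v)T⁽¹⁾(u)R(u−v) with rational R-matrix R(u) = u + P. -/
def IsQISMI {W : Type*} [AddCommGroup W] [Module ℂ W]
    (A B C D : ℂ → Module.End ℂ W) : Prop :=
  ∀ u v : ℂ,
    A u * A v = A v * A u ∧
    B u * B v = B v * B u ∧
    C u * C v = C v * C u ∧
    D u * D v = D v * D u ∧
    (u - v) • (A u * B v - B v * A u) = -(A u * B v - A v * B u) ∧
    (u - v) • (B u * A v - A v * B u) = -(B u * A v - B v * A u) ∧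
    (u - v) • (A u * C v - C v * A u) = -(C u * A v - C v * A u) ∧
    (u - v) • (C u * A v - A v * C u) = -(A u * C v - A v * C u) ∧
    (u - v) • (B u * D v - D v * B u) = -(D u * B v - D v * B u) ∧
    (u - v) • (D u * B v - B v * D u) = -(B u * D v - B v * D u) ∧
    (u - v) • (D u * C v - C v * D u) = -(D u * C v - D v * C u) ∧
    (u - v) • (C u * D v - D v * C u) = -(C u * D v - C v * D u) ∧
    (u - v) • (A u * D v - D v * A u) = -(C u * B v - C v * B u) ∧
    (u - v) • (D u * A v - A v * D u) = -(B u * C v - B v * C u) ∧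
    (u - v) • (B u * C v - C v * B u) = -(D u * A v - D v * A u) ∧
    (u - v) • (C u * B v - B v * C u) = -(A u * D v - A v * D u)

/-- The quantum determinant Δ(u) = A(u−1/2)D(u+1/2) − C(u−1/2)B(u+1/2) of a
QISM I family. -/
noncomputable def qDetI {W : Type*} [AddCommGroup W] [Module ℂ W]
    (A B C D : ℂ → Module.End ℂ W) (u : ℂ) : Module.End ℂ W :=
  A (u - 1/2) * D (u + 1/2) - C (u - 1/2) * B (u + 1/2)

/-! Write `a = u₀ + n` and `Q = Δ(a + 1/2) = A(a) D(a + 1) - C(a) B(a + 1)`. The exchange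
relations give `C(v - 1) A(v) = A(v - 1) C(v)` and `C(v + 1) D(v) = D(v + 1) C(v)`, so `A(v)` and
`D(v)` send `F(v)` into the lines `ker C(v ∓ 1)`; this defines `Δ₋` and `Δ₊`. For `w ≠ a`, `Q`
commutes with `C(w)` and `D(w)`: multiplied by a power of `a - w`, both commutators are linear
combinations of exchange relations. Hence `Q` preserves the line `ker C(u₀ + k)` for `k ≠ n`, so
`F(u₀ + k)` is an eigenvector, and `D(u₀ + k)` carries its eigenvalue to `F(u₀ + k + 1)`; the
eigenvalue is therefore constant on either side of `n`. The rewritings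
`Q = A(a + 1) D(a) - B(a + 1) C(a) = D(a) A(a + 1) - B(a) C(a + 1)` evaluate `Q` on `F(a)` and on
`F(a + 1)` as `Δ₊ Δ₋`, or as `0` at an end of the string. -/

theorem Submodule.exists_smul_eq_of_rank_eq_one {K V : Type*} [Field K] [AddCommGroup V]
    [Module K V] {s : Submodule K V} (hs : Module.rank K s = 1) {x y : V} (hx : x ∈ s)
    (hx0 : x ≠ 0) (hy : y ∈ s) : ∃ c : K, c • x = y := by
  obtain ⟨c, hc⟩ := (finrank_eq_one_iff_of_nonzero' (⟨x, hx⟩ : s) (by simpa using hx0)).mp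
    (Module.finrank_eq_of_rank_eq (by simpa using hs)) ⟨y, hy⟩
  exact ⟨c, congrArg Subtype.val hc⟩

namespace Module.End

variable {K V : Type*} [Field K] [AddCommGroup V] [Module K V]

theorem mem_eigenspace_of_commute_of_apply_eq_smul {f g : End K V} (hfg : Commute f g)
    {μ b : K} {x y : V} (hx : x ∈ f.eigenspace μ) (hb : b ≠ 0) (hxy : g x = b • y) :
    y ∈ f.eigenspace μ := by
  rw [mem_eigenspace_iff] at hx ⊢
  have : b • f y = b • μ • y := by
    rw [← map_smul, ← hxy, ← mul_apply, hfg.eq, mul_apply, hx, map_smul, hxy, smul_comm]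
  exact smul_right_injective V hb this

theorem exists_mem_eigenspace_of_commute_of_rank_ker_eq_one {f g : End K V} (hfg : Commute f g)
    (hg : Module.rank K (LinearMap.ker g) = 1) {x : V} (hx : g x = 0) (hx0 : x ≠ 0) :
    ∃ μ, x ∈ f.eigenspace μ := by
  have hfx : f x ∈ LinearMap.ker g := by
    rw [LinearMap.mem_ker, ← mul_apply, ← hfg.eq, mul_apply, hx, map_zero]
  obtain ⟨μ, hμ⟩ := Submodule.exists_smul_eq_of_rank_eq_one hg hx hx0 hfx
  exact ⟨μ, mem_eigenspace_iff.2 hμ.symm⟩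

theorem eq_of_mem_eigenspace_of_mem_eigenspace {f : End K V} {μ ν : K} {x : V} (hx0 : x ≠ 0)
    (hμ : x ∈ f.eigenspace μ) (hν : x ∈ f.eigenspace ν) : μ = ν :=
  smul_left_injective K hx0 ((mem_eigenspace_iff.1 hμ).symm.trans (mem_eigenspace_iff.1 hν))

end Module.End

theorem Set.OrdConnected.forall_mem_of_iff_add_one {S : Set ℤ} (hS : S.OrdConnected)
    {P : ℤ → Prop} {n : ℤ} (hstep : ∀ j ∈ S, j + 1 ∈ S → j ≠ n → (P j ↔ P (j + 1)))
    (hn : n ∈ S → P n) (hn1 : n + 1 ∈ S → P (n + 1)) (hnS : n ∈ S ∨ n + 1 ∈ S) :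
    ∀ k ∈ S, P k := by
  intro k hk
  rcases le_or_gt k n with hkn | hnk
  · have hnS : n ∈ S := hnS.elim id fun h ↦ hS.out hk h ⟨hkn, by omega⟩
    induction k, hkn using Int.leInductionDown with
    | base => exact hn hk
    | pred j hjn ih =>
      have hj : j ∈ S := hS.out hk hnS ⟨by omega, hjn⟩
      exact (hstep (j - 1) hk (by simpa using hj) (by omega)).2 (by simpa using ih hj)
  · have hnS : n + 1 ∈ S := hnS.elim (fun h ↦ hS.out h hk ⟨by omega, by omega⟩) id
    induction k, (show n + 1 ≤ k by omega) using Int.leInduction with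
    | base => exact hn1 hk
    | succ j hjn ih =>
      have hj : j ∈ S := hS.out hnS hk ⟨hjn, by omega⟩
      exact (hstep j hj hk (by omega)).1 (ih hj (by omega))

namespace IsQISMI

variable {W : Type*} [AddCommGroup W] [Module ℂ W] {A B C D : ℂ → Module.End ℂ W}

theorem commute_C (h : IsQISMI A B C D) (u v : ℂ) : Commute (C u) (C v) := (h u v).2.2.1

theorem commute_D (h : IsQISMI A B C D) (u v : ℂ) : Commute (D u) (D v) := (h u v).2.2.2.1

theorem exchange_AC (h : IsQISMI A B C D) (u v : ℂ) :
    (u - v) • (A u * C v - C v * A u) = -(C u * A v - C v * A u) :=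
  (h u v).2.2.2.2.2.2.1

theorem exchange_CA (h : IsQISMI A B C D) (u v : ℂ) :
    (u - v) • (C u * A v - A v * C u) = -(A u * C v - A v * C u) :=
  (h u v).2.2.2.2.2.2.2.1

theorem exchange_BD (h : IsQISMI A B C D) (u v : ℂ) :
    (u - v) • (B u * D v - D v * B u) = -(D u * B v - D v * B u) :=
  (h u v).2.2.2.2.2.2.2.2.1

theorem exchange_DC (h : IsQISMI A B C D) (u v : ℂ) :
    (u - v) • (D u * C v - C v * D u) = -(D u * C v - D v * C u) :=
  (h u v).2.2.2.2.2.2.2.2.2.2.1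

theorem exchange_CD (h : IsQISMI A B C D) (u v : ℂ) :
    (u - v) • (C u * D v - D v * C u) = -(C u * D v - C v * D u) :=
  (h u v).2.2.2.2.2.2.2.2.2.2.2.1

theorem exchange_AD (h : IsQISMI A B C D) (u v : ℂ) :
    (u - v) • (A u * D v - D v * A u) = -(C u * B v - C v * B u) :=
  (h u v).2.2.2.2.2.2.2.2.2.2.2.2.1

theorem exchange_DA (h : IsQISMI A B C D) (u v : ℂ) :
    (u - v) • (D u * A v - A v * D u) = -(B u * C v - B v * C u) :=
  (h u v).2.2.2.2.2.2.2.2.2.2.2.2.2.1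

theorem exchange_BC (h : IsQISMI A B C D) (u v : ℂ) :
    (u - v) • (B u * C v - C v * B u) = -(D u * A v - D v * A u) :=
  (h u v).2.2.2.2.2.2.2.2.2.2.2.2.2.2.1

theorem exchange_CB (h : IsQISMI A B C D) (u v : ℂ) :
    (u - v) • (C u * B v - B v * C u) = -(A u * D v - A v * D u) :=
  (h u v).2.2.2.2.2.2.2.2.2.2.2.2.2.2.2

theorem C_sub_one_mul_A (h : IsQISMI A B C D) (v : ℂ) : C (v - 1) * A v = A (v - 1) * C v := by
  linear_combination (norm := module) -h.exchange_CA (v - 1) v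

theorem C_add_one_mul_D (h : IsQISMI A B C D) (v : ℂ) : C (v + 1) * D v = D (v + 1) * C v := by
  linear_combination (norm := module)
    ((1 : ℂ) / 2) • (h.exchange_CD (v + 1) v - h.exchange_DC (v + 1) v)

theorem qDetI_add_half (a : ℂ) :
    qDetI A B C D (a + 1 / 2) = A a * D (a + 1) - C a * B (a + 1) := by
  rw [qDetI, add_sub_cancel_right, add_assoc, add_halves]

theorem qDetI_add_half_eq_A_mul_D_sub (h : IsQISMI A B C D) (a : ℂ) :
    qDetI A B C D (a + 1 / 2) = A (a + 1) * D a - B (a + 1) * C a := by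
  rw [qDetI_add_half]
  linear_combination (norm := module) h.exchange_CB a (a + 1)

theorem qDetI_add_half_eq_D_mul_A_sub (h : IsQISMI A B C D) (a : ℂ) :
    qDetI A B C D (a + 1 / 2) = D a * A (a + 1) - B a * C (a + 1) := by
  rw [qDetI_add_half]
  linear_combination (norm := module) -h.exchange_AD a (a + 1) - h.exchange_BC a (a + 1)

theorem commute_D_qDetI (h : IsQISMI A B C D) {a w : ℂ} (haw : a ≠ w) :
    Commute (D w) (qDetI A B C D (a + 1 / 2)) := by
  set Q := qDetI A B C D (a + 1 / 2) with hQ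
  have hscaled : (a - w) • (D w * Q - Q * D w) = 0 := by
    linear_combination (norm := skip)
      (-(a - w)) • congrArg (· * A a) (h.commute_D (a + 1) w).eq +
      congrArg (C (a + 1) * ·) (h.exchange_BD a w) -
      congrArg (· * B w) (h.exchange_DC a (a + 1)) +
      congrArg (· * B a) (h.exchange_DC w (a + 1)) -
      (a - w) • congrArg (D w * ·) (h.exchange_AD a (a + 1)) +
      (a - w) • congrArg (· * D w) (h.exchange_AD a (a + 1)) -
      congrArg (D (a + 1) * ·) (h.exchange_AD a w)
    simp only [hQ, qDetI_add_half, mul_sub, sub_mul, mul_neg, neg_mul, mul_smul_comm,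
      smul_mul_assoc, mul_assoc]
    module
  exact sub_eq_zero.1 ((smul_eq_zero.1 hscaled).resolve_left (sub_ne_zero.2 haw))

theorem commute_C_qDetI (h : IsQISMI A B C D) {a w : ℂ} (haw : a ≠ w) :
    Commute (C w) (qDetI A B C D (a + 1 / 2)) := by
  set Q := qDetI A B C D (a + 1 / 2) with hQ
  set x := a - w with hx
  have hscaled : x ^ 2 • (C w * Q - Q * C w) = 0 := by
    linear_combination (norm := skip)
      (2 * x * (1 + x)) • congrArg (· * B w) (h.commute_C a (a + 1)).eq -
      (2 * x * (1 + x)) • congrArg (· * B (a + 1)) (h.commute_C a w).eq +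
      (2 * x * (1 + x)) • congrArg (· * B a) (h.commute_C (a + 1) w).eq -
      x • congrArg (D (a + 1) * ·) (h.exchange_AC a w) +
      (x ^ 2 * (1 + x)) • congrArg (D w * ·) (h.exchange_AC (a + 1) a) -
      (x * (1 + x) ^ 2) • congrArg (· * D w) (h.exchange_AC (a + 1) a) +
      x • congrArg (· * D a) (h.exchange_AC (a + 1) w) -
      x • congrArg (· * A w) (h.exchange_DC a (a + 1)) +
      (1 + x) • congrArg (A (a + 1) * ·) (h.exchange_DC a w) -
      (2 * (1 + x)) • congrArg (· * A (a + 1)) (h.exchange_DC a w) +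
      ((1 + x) ^ 2) • congrArg (A (a + 1) * ·) (h.exchange_DC w a) -
      (2 * (1 + x) ^ 2) • congrArg (· * A (a + 1)) (h.exchange_DC w a) +
      (x * (1 + x)) • congrArg (· * A a) (h.exchange_DC w (a + 1)) -
      x ^ 2 • congrArg (C w * ·) (h.exchange_AD a (a + 1)) +
      x ^ 2 • congrArg (· * C w) (h.exchange_AD a (a + 1)) +
      ((1 + x) ^ 2) • congrArg (C (a + 1) * ·) (h.exchange_AD a w) +
      (2 * x * (1 + x)) • congrArg (C w * ·) (h.exchange_AD (a + 1) a) -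
      (2 * x * (1 + x)) • congrArg (C a * ·) (h.exchange_AD (a + 1) w) +
      x ^ 2 • congrArg (· * C a) (h.exchange_AD (a + 1) w) +
      ((1 - x) * (1 + x)) • congrArg (C (a + 1) * ·) (h.exchange_AD w a) -
      x ^ 2 • congrArg (C w * ·) (h.exchange_DA a (a + 1)) +
      x ^ 2 • congrArg (C (a + 1) * ·) (h.exchange_DA a w) -
      x ^ 2 • congrArg (C w * ·) (h.exchange_BC a (a + 1))
    simp only [hQ, hx, qDetI_add_half, mul_sub, sub_mul, mul_neg, neg_mul, mul_smul_comm,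
      smul_mul_assoc, mul_assoc]
    module
  exact sub_eq_zero.1 ((smul_eq_zero.1 hscaled).resolve_left (pow_ne_zero 2 (sub_ne_zero.2 haw)))

end IsQISMI

section CKernelString

variable {W : Type*} [AddCommGroup W] [Module ℂ W]

/-- The vectors `f m = F(u₀ + m)` of the theorem, indexed by an integer interval `S`. -/
structure IsCKernelString (A B C D : ℂ → Module.End ℂ W) (u₀ : ℂ) (S : Set ℤ) (f : ℤ → W) :
    Prop where
  qism : IsQISMI A B C D
  ordConnected : S.OrdConnected
  rank_ker : ∀ m ∈ S, Module.rank ℂ (LinearMap.ker (C (u₀ + m))) = 1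
  ne_zero : ∀ m ∈ S, f m ≠ 0
  C_apply_eq_zero : ∀ m ∈ S, C (u₀ + m) (f m) = 0
  A_apply_eq_zero : ∀ m ∈ S, m - 1 ∉ S → A (u₀ + m) (f m) = 0
  D_apply_eq_zero : ∀ m ∈ S, m + 1 ∉ S → D (u₀ + m) (f m) = 0
  D_apply_ne_zero : ∀ m ∈ S, m + 1 ∈ S → D (u₀ + m) (f m) ≠ 0

open Classical in
/-- The eigenvalue `c(u₀ + n + 1/2)`, for shift coefficients `α m = Δ₋(u₀ + m - 1/2)` and
`β m = Δ₊(u₀ + m + 1/2)`. -/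
noncomputable def qDetEigenvalue (S : Set ℤ) (α β : ℤ → ℂ) (n : ℤ) : ℂ :=
  if n ∈ S ∧ n + 1 ∈ S then β n * α (n + 1) else 0

namespace IsCKernelString

open Module.End

variable {A B C D : ℂ → Module.End ℂ W} {u₀ : ℂ} {S : Set ℤ} {f : ℤ → W}

theorem exists_A_apply_eq_smul (h : IsCKernelString A B C D u₀ S f) {m : ℤ} (hm : m ∈ S)
    (hm1 : m - 1 ∈ S) : ∃ a : ℂ, A (u₀ + m) (f m) = a • f (m - 1) := by
  have hA : A (u₀ + m) (f m) ∈ LinearMap.ker (C (u₀ + (m - 1 : ℤ))) := by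
    rw [LinearMap.mem_ker, Int.cast_sub, Int.cast_one, ← add_sub_assoc, ← mul_apply,
      h.qism.C_sub_one_mul_A, mul_apply, h.C_apply_eq_zero m hm, map_zero]
  obtain ⟨a, ha⟩ := Submodule.exists_smul_eq_of_rank_eq_one (h.rank_ker _ hm1)
    (LinearMap.mem_ker.2 (h.C_apply_eq_zero _ hm1)) (h.ne_zero _ hm1) hA
  exact ⟨a, ha.symm⟩

theorem exists_D_apply_eq_smul (h : IsCKernelString A B C D u₀ S f) {m : ℤ} (hm : m ∈ S)
    (hm1 : m + 1 ∈ S) : ∃ b : ℂ, b ≠ 0 ∧ D (u₀ + m) (f m) = b • f (m + 1) := by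
  have hD : D (u₀ + m) (f m) ∈ LinearMap.ker (C (u₀ + (m + 1 : ℤ))) := by
    rw [LinearMap.mem_ker, Int.cast_add, Int.cast_one, ← add_assoc, ← mul_apply,
      h.qism.C_add_one_mul_D, mul_apply, h.C_apply_eq_zero m hm, map_zero]
  obtain ⟨b, hb⟩ := Submodule.exists_smul_eq_of_rank_eq_one (h.rank_ker _ hm1)
    (LinearMap.mem_ker.2 (h.C_apply_eq_zero _ hm1)) (h.ne_zero _ hm1) hD
  refine ⟨b, fun hb0 ↦ h.D_apply_ne_zero m hm hm1 ?_, hb.symm⟩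
  rw [← hb, hb0, zero_smul]

theorem exists_A_shift (h : IsCKernelString A B C D u₀ S f) :
    ∃ α : ℤ → ℂ, ∀ m ∈ S, m - 1 ∈ S → A (u₀ + m) (f m) = α m • f (m - 1) := by
  choose! α hα using fun m (hm : m ∈ S) hm1 ↦ h.exists_A_apply_eq_smul hm hm1
  exact ⟨α, hα⟩

theorem exists_D_shift (h : IsCKernelString A B C D u₀ S f) :
    ∃ β : ℤ → ℂ, ∀ m ∈ S, m + 1 ∈ S → D (u₀ + m) (f m) = β m • f (m + 1) := by
  choose! β _ hβ using fun m (hm : m ∈ S) hm1 ↦ h.exists_D_apply_eq_smul hm hm1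
  exact ⟨β, hβ⟩

theorem mem_eigenspace_iff_add_one (h : IsCKernelString A B C D u₀ S f) {n j : ℤ} (hj : j ∈ S)
    (hj1 : j + 1 ∈ S) (hjn : j ≠ n) {μ : ℂ} :
    f j ∈ (qDetI A B C D (u₀ + n + 1 / 2)).eigenspace μ ↔
      f (j + 1) ∈ (qDetI A B C D (u₀ + n + 1 / 2)).eigenspace μ := by
  have hnj : u₀ + (n : ℂ) ≠ u₀ + j := by simpa using hjn.symm
  obtain ⟨b, hb, hD⟩ := h.exists_D_apply_eq_smul hj hj1
  have hcomm := (h.qism.commute_D_qDetI hnj).symm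
  refine ⟨fun hfj ↦ mem_eigenspace_of_commute_of_apply_eq_smul hcomm hfj hb hD, fun hfj1 ↦ ?_⟩
  obtain ⟨γ, hγ⟩ := exists_mem_eigenspace_of_commute_of_rank_ker_eq_one
    (h.qism.commute_C_qDetI hnj).symm (h.rank_ker j hj) (h.C_apply_eq_zero j hj) (h.ne_zero j hj)
  rwa [eq_of_mem_eigenspace_of_mem_eigenspace (h.ne_zero _ hj1)
    (mem_eigenspace_of_commute_of_apply_eq_smul hcomm hγ hb hD) hfj1] at hγ

variable {α β : ℤ → ℂ}

theorem mem_eigenspace_qDetI_self (h : IsCKernelString A B C D u₀ S f)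
    (hα : ∀ m ∈ S, m - 1 ∈ S → A (u₀ + m) (f m) = α m • f (m - 1))
    (hβ : ∀ m ∈ S, m + 1 ∈ S → D (u₀ + m) (f m) = β m • f (m + 1)) {n : ℤ} (hn : n ∈ S) :
    f n ∈ (qDetI A B C D (u₀ + n + 1 / 2)).eigenspace (qDetEigenvalue S α β n) := by
  rw [mem_eigenspace_iff, h.qism.qDetI_add_half_eq_A_mul_D_sub, LinearMap.sub_apply, mul_apply,
    mul_apply, h.C_apply_eq_zero n hn, map_zero, sub_zero, qDetEigenvalue]
  by_cases hn1 : n + 1 ∈ S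
  · have hα1 : A (u₀ + n + 1) (f (n + 1)) = α (n + 1) • f n := by
      simpa [add_assoc] using hα (n + 1) hn1 (by simpa using hn)
    rw [if_pos ⟨hn, hn1⟩, hβ n hn hn1, map_smul, hα1, smul_smul]
  · rw [if_neg fun h' ↦ hn1 h'.2, h.D_apply_eq_zero n hn hn1, map_zero, zero_smul]

theorem mem_eigenspace_qDetI_add_one (h : IsCKernelString A B C D u₀ S f)
    (hα : ∀ m ∈ S, m - 1 ∈ S → A (u₀ + m) (f m) = α m • f (m - 1))
    (hβ : ∀ m ∈ S, m + 1 ∈ S → D (u₀ + m) (f m) = β m • f (m + 1)) {n : ℤ} (hn1 : n + 1 ∈ S) :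
    f (n + 1) ∈ (qDetI A B C D (u₀ + n + 1 / 2)).eigenspace (qDetEigenvalue S α β n) := by
  have hC : C (u₀ + n + 1) (f (n + 1)) = 0 := by
    simpa [add_assoc] using h.C_apply_eq_zero _ hn1
  rw [mem_eigenspace_iff, h.qism.qDetI_add_half_eq_D_mul_A_sub, LinearMap.sub_apply, mul_apply,
    mul_apply, hC, map_zero, sub_zero, qDetEigenvalue]
  by_cases hn : n ∈ S
  · have hα1 : A (u₀ + n + 1) (f (n + 1)) = α (n + 1) • f n := by
      simpa [add_assoc] using hα (n + 1) hn1 (by simpa using hn)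
    rw [if_pos ⟨hn, hn1⟩, hα1, map_smul, hβ n hn hn1, smul_smul, mul_comm]
  · have hA : A (u₀ + n + 1) (f (n + 1)) = 0 := by
      simpa [add_assoc] using h.A_apply_eq_zero _ hn1 (by simpa using hn)
    rw [if_neg fun h' ↦ hn h'.1, hA, map_zero, zero_smul]

theorem mem_eigenspace_qDetI (h : IsCKernelString A B C D u₀ S f)
    (hα : ∀ m ∈ S, m - 1 ∈ S → A (u₀ + m) (f m) = α m • f (m - 1))
    (hβ : ∀ m ∈ S, m + 1 ∈ S → D (u₀ + m) (f m) = β m • f (m + 1)) {n : ℤ}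
    (hn : n ∈ S ∨ n + 1 ∈ S) {k : ℤ} (hk : k ∈ S) :
    f k ∈ (qDetI A B C D (u₀ + n + 1 / 2)).eigenspace (qDetEigenvalue S α β n) :=
  h.ordConnected.forall_mem_of_iff_add_one
    (fun _ hj hj1 hjn ↦ h.mem_eigenspace_iff_add_one hj hj1 hjn)
    (h.mem_eigenspace_qDetI_self hα hβ) (h.mem_eigenspace_qDetI_add_one hα hβ) hn k hk

end IsCKernelString

end CKernelString

theorem intToE_strictMono : StrictMono intToE := fun m k h ↦ by
  simpa [intToE] using h

theorem intToE_add_one (m : ℤ) : intToE (m + 1) = intToE m + 1 := by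
  simp [intToE]

theorem intToE_lt_iff_add_one_le {e : EReal} (he : e = ⊥ ∨ e = ⊤ ∨ ∃ k : ℤ, e = intToE k)
    (m : ℤ) : intToE m < e ↔ intToE (m + 1) ≤ e := by
  rcases he with rfl | rfl | ⟨k, rfl⟩
  · exact iff_of_false not_lt_bot fun h ↦ EReal.coe_ne_bot _ (le_bot_iff.1 h)
  · exact iff_of_true (EReal.coe_lt_top _) le_top
  · rw [intToE_strictMono.lt_iff_lt, intToE_strictMono.le_iff_le, Int.add_one_le_iff]

theorem lt_intToE_add_one_iff {e : EReal} (he : e = ⊥ ∨ e = ⊤ ∨ ∃ k : ℤ, e = intToE k)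
    (m : ℤ) : e < intToE (m + 1) ↔ e ≤ intToE m := by
  rcases he with rfl | rfl | ⟨k, rfl⟩
  · exact iff_of_true (EReal.bot_lt_coe _) bot_le
  · exact iff_of_false not_top_lt fun h ↦ EReal.coe_ne_top _ (top_le_iff.1 h)
  · rw [intToE_strictMono.lt_iff_lt, intToE_strictMono.le_iff_le, Int.lt_add_one_iff]

theorem intToE_add_one_eq_add_one_iff (m : ℤ) (e : EReal) :
    intToE m + 1 = e + 1 ↔ intToE m = e := by
  rw [← intToE_add_one]
  induction e with
  | bot => exact iff_of_false (EReal.coe_ne_bot _) (EReal.coe_ne_bot _)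
  | coe x =>
    rw [intToE, intToE, ← EReal.coe_one, ← EReal.coe_add, EReal.coe_eq_coe_iff,
      EReal.coe_eq_coe_iff]
    push_cast
    exact add_left_inj 1
  | top => exact iff_of_false (EReal.coe_ne_top _) (EReal.coe_ne_top _)

section Interval

open Set

variable {jm jp : EReal}

theorem add_one_mem_preimage_Ioo_iff (hjp : jp = ⊥ ∨ jp = ⊤ ∨ ∃ k : ℤ, jp = intToE k) {m : ℤ}
    (hm : m ∈ intToE ⁻¹' Ioo jm jp) : m + 1 ∈ intToE ⁻¹' Ioo jm jp ↔ intToE m + 1 ≠ jp := by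
  have hlo : jm < intToE (m + 1) := hm.1.trans (intToE_strictMono (lt_add_one m))
  rw [mem_preimage, mem_Ioo, and_iff_right hlo, lt_iff_le_and_ne,
    ← intToE_lt_iff_add_one_le hjp, intToE_add_one]
  exact and_iff_right hm.2

theorem mem_preimage_Ioo_iff_of_add_one_mem (hjm : jm = ⊥ ∨ jm = ⊤ ∨ ∃ k : ℤ, jm = intToE k)
    {m : ℤ} (hm1 : m + 1 ∈ intToE ⁻¹' Ioo jm jp) : m ∈ intToE ⁻¹' Ioo jm jp ↔ intToE m ≠ jm := by
  have hhi : intToE m < jp := (intToE_strictMono (lt_add_one m)).trans hm1.2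
  rw [mem_preimage, mem_Ioo, and_iff_left hhi, lt_iff_le_and_ne, ne_comm]
  exact and_iff_right ((lt_intToE_add_one_iff hjm m).1 hm1.1)

theorem sub_one_mem_preimage_Ioo_iff (hjm : jm = ⊥ ∨ jm = ⊤ ∨ ∃ k : ℤ, jm = intToE k) {m : ℤ}
    (hm : m ∈ intToE ⁻¹' Ioo jm jp) : m - 1 ∈ intToE ⁻¹' Ioo jm jp ↔ intToE m ≠ jm + 1 := by
  rw [mem_preimage_Ioo_iff_of_add_one_mem hjm (by simpa using hm), ← sub_add_cancel m 1,
    intToE_add_one, add_sub_cancel_right, Ne, Ne, intToE_add_one_eq_add_one_iff]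

theorem mem_and_add_one_mem_preimage_Ioo_iff
    (hjm : jm = ⊥ ∨ jm = ⊤ ∨ ∃ k : ℤ, jm = intToE k)
    (hjp : jp = ⊥ ∨ jp = ⊤ ∨ ∃ k : ℤ, jp = intToE k) {n : ℤ}
    (hn : n ∈ intToE ⁻¹' Ioo jm jp ∨ n + 1 ∈ intToE ⁻¹' Ioo jm jp) :
    n ∈ intToE ⁻¹' Ioo jm jp ∧ n + 1 ∈ intToE ⁻¹' Ioo jm jp ↔
      intToE n + 1 ≠ jp ∧ intToE n ≠ jm := by
  rcases hn with hn | hn1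
  · rw [add_one_mem_preimage_Ioo_iff hjp hn]
    simp [hn, hn.1.ne']
  · rw [mem_preimage_Ioo_iff_of_add_one_mem hjm hn1, ← intToE_add_one]
    simp [hn1, hn1.2.ne]

end Interval

theorem isCKernelString_preimage_Ioo {W : Type*} [AddCommGroup W] [Module ℂ W]
    {A B C D : ℂ → Module.End ℂ W} (hQISM : IsQISMI A B C D) {u₀ : ℂ} {jm jp : EReal}
    (hjm : jm = ⊥ ∨ jm = ⊤ ∨ ∃ k : ℤ, jm = intToE k)
    (hjp : jp = ⊥ ∨ jp = ⊤ ∨ ∃ k : ℤ, jp = intToE k)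
    (hker : ∀ m : ℤ, jm < intToE m → intToE m < jp →
      Module.rank ℂ (LinearMap.ker (C (u₀ + m))) = 1)
    {F : ℂ → W} (hF : ∀ m : ℤ, jm < intToE m → intToE m < jp →
      F (u₀ + m) ≠ 0 ∧ C (u₀ + m) (F (u₀ + m)) = 0)
    (hA : ∀ m : ℤ, jm < intToE m → intToE m < jp → intToE m = jm + 1 →
      A (u₀ + m) (F (u₀ + m)) = 0)
    (hD : ∀ m : ℤ, jm < intToE m → intToE m < jp → intToE m + 1 = jp →
      D (u₀ + m) (F (u₀ + m)) = 0)
    (hD' : ∀ m : ℤ, jm < intToE m → intToE m < jp → intToE m + 1 ≠ jp →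
      D (u₀ + m) (F (u₀ + m)) ≠ 0) :
    IsCKernelString A B C D u₀ (intToE ⁻¹' Set.Ioo jm jp) (fun m ↦ F (u₀ + m)) where
  qism := hQISM
  ordConnected := Set.ordConnected_Ioo.preimage_mono intToE_strictMono.monotone
  rank_ker m hm := hker m hm.1 hm.2
  ne_zero m hm := (hF m hm.1 hm.2).1
  C_apply_eq_zero m hm := (hF m hm.1 hm.2).2
  A_apply_eq_zero m hm hm1 :=
    hA m hm.1 hm.2 (not_ne_iff.1 (mt (sub_one_mem_preimage_Ioo_iff hjm hm).2 hm1))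
  D_apply_eq_zero m hm hm1 :=
    hD m hm.1 hm.2 (not_ne_iff.1 (mt (add_one_mem_preimage_Ioo_iff hjp hm).2 hm1))
  D_apply_ne_zero m hm hm1 := hD' m hm.1 hm.2 ((add_one_mem_preimage_Ioo_iff hjp hm).1 hm1)

/-- Theorem 1 of the paper: shift-operator action of a QISM I family on a string of
vectors F(u), u ∈ 𝒟 = {u₀ + m : m ∈ ℤ, j₋ < m < j₊}, annihilated by C(u), and the
scalar action and factorization Δ(u) = Δ₊(u)Δ₋(u) of the quantum determinant on
`Span{F(v) : v ∈ 𝒟}`. -/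
theorem stmt_0 {W : Type*} [AddCommGroup W] [Module ℂ W]
    (A B C D : ℂ → Module.End ℂ W) (hQISM : IsQISMI A B C D)
    (u₀ : ℂ) (jm jp : EReal)
    (hjm : jm = ⊥ ∨ jm = ⊤ ∨ ∃ k : ℤ, jm = intToE k)
    (hjp : jp = ⊥ ∨ jp = ⊤ ∨ ∃ k : ℤ, jp = intToE k)
    (hker : ∀ m : ℤ, jm < intToE m → intToE m < jp →
      Module.rank ℂ (LinearMap.ker (C (u₀ + (m : ℂ)))) = 1)
    (hAcond : ∀ m : ℤ, jm < intToE m → intToE m < jp → ∀ w : W, w ≠ 0 →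
      C (u₀ + (m : ℂ)) w = 0 →
      ((intToE m ≠ jm + 1 → A (u₀ + (m : ℂ)) w ≠ 0) ∧
       (intToE m = jm + 1 → A (u₀ + (m : ℂ)) w = 0)))
    (hDcond : ∀ m : ℤ, jm < intToE m → intToE m < jp → ∀ w : W, w ≠ 0 →
      C (u₀ + (m : ℂ)) w = 0 →
      ((intToE m + 1 ≠ jp → D (u₀ + (m : ℂ)) w ≠ 0) ∧
       (intToE m + 1 = jp → D (u₀ + (m : ℂ)) w = 0)))
    (F : ℂ → W)
    (hF : ∀ m : ℤ, jm < intToE m → intToE m < jp →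
      F (u₀ + (m : ℂ)) ≠ 0 ∧ C (u₀ + (m : ℂ)) (F (u₀ + (m : ℂ))) = 0) :
    ∃ Δminus Δplus : ℂ → ℂ,
      (∀ m : ℤ, jm < intToE m → intToE m < jp → intToE m ≠ jm + 1 →
        A (u₀ + (m : ℂ)) (F (u₀ + (m : ℂ)))
          = Δminus (u₀ + (m : ℂ) - 1/2) • F (u₀ + (m : ℂ) - 1)) ∧
      (∀ m : ℤ, jm < intToE m → intToE m < jp → intToE m + 1 ≠ jp →
        D (u₀ + (m : ℂ)) (F (u₀ + (m : ℂ)))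
          = Δplus (u₀ + (m : ℂ) + 1/2) • F (u₀ + (m : ℂ) + 1)) ∧
      ∃ c : ℂ → ℂ,
        ∀ n : ℤ,
          ((jm < intToE n ∧ intToE n < jp) ∨ (jm < intToE n + 1 ∧ intToE n + 1 < jp)) →
          (∀ w ∈ Submodule.span ℂ
              {w : W | ∃ k : ℤ, jm < intToE k ∧ intToE k < jp ∧ w = F (u₀ + (k : ℂ))},
            (qDetI A B C D (u₀ + (n : ℂ) + 1/2)) w = c (u₀ + (n : ℂ) + 1/2) • w) ∧
          ((intToE n + 1 ≠ jp ∧ intToE n ≠ jm) →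
            c (u₀ + (n : ℂ) + 1/2)
              = Δplus (u₀ + (n : ℂ) + 1/2) * Δminus (u₀ + (n : ℂ) + 1/2)) ∧
          ((intToE n + 1 = jp ∨ intToE n = jm) → c (u₀ + (n : ℂ) + 1/2) = 0) := by
  set S : Set ℤ := intToE ⁻¹' Set.Ioo jm jp
  have hstr : IsCKernelString A B C D u₀ S (fun m ↦ F (u₀ + m)) :=
    isCKernelString_preimage_Ioo hQISM hjm hjp hker hF
      (fun m h1 h2 ↦ (hAcond m h1 h2 _ (hF m h1 h2).1 (hF m h1 h2).2).2)
      (fun m h1 h2 ↦ (hDcond m h1 h2 _ (hF m h1 h2).1 (hF m h1 h2).2).2)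
      (fun m h1 h2 ↦ (hDcond m h1 h2 _ (hF m h1 h2).1 (hF m h1 h2).2).1)
  obtain ⟨α, hα⟩ := hstr.exists_A_shift
  obtain ⟨β, hβ⟩ := hstr.exists_D_shift
  set e : ℤ → ℂ := fun m ↦ u₀ + m + 1 / 2
  have he : e.Injective := fun m k hmk ↦ by simpa [e] using hmk
  refine ⟨Function.extend e (fun m ↦ α (m + 1)) 0, Function.extend e β 0, fun m h1 h2 hm ↦ ?_,
    fun m h1 h2 hm ↦ ?_, Function.extend e (qDetEigenvalue S α β) 0, fun n hn ↦ ?_⟩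
  · have hpt : u₀ + (m : ℂ) - 1 / 2 = e (m - 1) := by simp only [e]; push_cast; ring
    rw [hpt, he.extend_apply, sub_add_cancel,
      hα m ⟨h1, h2⟩ ((sub_one_mem_preimage_Ioo_iff hjm ⟨h1, h2⟩).2 hm), Int.cast_sub,
      Int.cast_one, add_sub_assoc]
  · rw [show u₀ + (m : ℂ) + 1 / 2 = e m from rfl, he.extend_apply,
      hβ m ⟨h1, h2⟩ ((add_one_mem_preimage_Ioo_iff hjp ⟨h1, h2⟩).2 hm), Int.cast_add,
      Int.cast_one, add_assoc]
  · have hn' : n ∈ S ∨ n + 1 ∈ S := by rwa [← intToE_add_one] at hn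
    simp only [show u₀ + (n : ℂ) + 1 / 2 = e n from rfl, he.extend_apply]
    refine ⟨fun w hw ↦ ?_, fun hne ↦ ?_, fun hedge ↦ ?_⟩
    · refine Module.End.mem_eigenspace_iff.1 (Submodule.span_le.2 ?_ hw)
      rintro _ ⟨k, hk1, hk2, rfl⟩
      exact hstr.mem_eigenspace_qDetI hα hβ hn' ⟨hk1, hk2⟩
    · rw [qDetEigenvalue, if_pos ((mem_and_add_one_mem_preimage_Ioo_iff hjm hjp hn').2 hne)]
    · rw [qDetEigenvalue, if_neg (by rw [mem_and_add_one_mem_preimage_Ioo_iff hjm hjp hn']; tauto)]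
end

section
/- Let W be a complex vector space, let α, γ, δ, Q₀, Q₁ ∈ ℂ with γ ≠ 0, and let A₀, B₀, C₀, D₀ be linear operators on W with B₀ injective. Then the following two statements are equivalent. (b): the six commutators [A₀,B₀] = −αB₀, [A₀,C₀] = αC₀ − γA₀, [A₀,D₀] = −γB₀, [B₀,C₀] = αD₀ − δA₀, [B₀,D₀] = −δB₀, [C₀,D₀] = δC₀ − γD₀ hold, together with αD₀ − γB₀ + δA₀ = Q₁·Id and A₀D₀ − B₀C₀ + (1/2)(αD₀ + γB₀ − δA₀) − (1/4)αδ·Id = Q₀·Id. (c): the three equalities [D₀,A₀] = αD₀ + δA₀ − Q₁·Id, γB₀ = αD₀ + δA₀ − Q₁·Id, and B₀C₀ = (A₀ + α·Id)D₀ − ((1/4)αδ + (1/2)Q₁ + Q₀)·Id hold. -/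
/-- Lemma 5 (b) ⟺ (c) of the paper: rank-1 QISM I relations with β = 0. -/
theorem stmt_3 {W : Type*} [AddCommGroup W] [Module ℂ W]
    (α γ δ Q₀ Q₁ : ℂ) (hγ : γ ≠ 0)
    (A₀ B₀ C₀ D₀ : Module.End ℂ W) (hB₀ : Function.Injective B₀) :
    ((A₀ * B₀ - B₀ * A₀ = -α • B₀ ∧
      A₀ * C₀ - C₀ * A₀ = α • C₀ - γ • A₀ ∧
      A₀ * D₀ - D₀ * A₀ = -γ • B₀ ∧
      B₀ * C₀ - C₀ * B₀ = α • D₀ - δ • A₀ ∧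
      B₀ * D₀ - D₀ * B₀ = -δ • B₀ ∧
      C₀ * D₀ - D₀ * C₀ = δ • C₀ - γ • D₀) ∧
     α • D₀ - γ • B₀ + δ • A₀ = Q₁ • (1 : Module.End ℂ W) ∧
     A₀ * D₀ - B₀ * C₀ + (1/2 : ℂ) • (α • D₀ + γ • B₀ - δ • A₀)
        - ((1/4 : ℂ) * α * δ) • (1 : Module.End ℂ W) = Q₀ • (1 : Module.End ℂ W))
    ↔
    (D₀ * A₀ - A₀ * D₀ = α • D₀ + δ • A₀ - Q₁ • (1 : Module.End ℂ W) ∧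
     γ • B₀ = α • D₀ + δ • A₀ - Q₁ • (1 : Module.End ℂ W) ∧
     B₀ * C₀ = (A₀ + α • (1 : Module.End ℂ W)) * D₀
        - ((1/4 : ℂ) * α * δ + (1/2 : ℂ) * Q₁ + Q₀) • (1 : Module.End ℂ W)) := by
  have hcancel : ∀ X Y : Module.End ℂ W, B₀ * X = B₀ * Y → X = Y := by
    intro X Y h
    ext w
    exact hB₀ (LinearMap.ext_iff.mp h w)
  constructor
  · rintro ⟨⟨c1, c2, c3, c4, c5, c6⟩, cQ1, cQ0⟩
    refine ⟨?_, ?_, ?_⟩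
    · linear_combination (norm := (noncomm_ring; all_goals (match_scalars; all_goals ((try simp only [smul_eq_mul, zsmul_eq_mul, nsmul_eq_mul]); ring1)))) -c3 - cQ1
    · linear_combination (norm := (noncomm_ring; all_goals (match_scalars; all_goals ((try simp only [smul_eq_mul, zsmul_eq_mul, nsmul_eq_mul]); ring1)))) -cQ1
    · linear_combination (norm := (noncomm_ring; all_goals (match_scalars; all_goals ((try simp only [smul_eq_mul, zsmul_eq_mul, nsmul_eq_mul]); ring1)))) -cQ0 - (1/2 : ℂ) • cQ1
  · rintro ⟨h1, h2, h3⟩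
    -- [A₀, B₀] = -α • B₀
    have g1 : A₀ * B₀ - B₀ * A₀ = -α • B₀ := by
      apply smul_right_injective (Module.End ℂ W) hγ
      linear_combination (norm := (noncomm_ring; all_goals (match_scalars; all_goals ((try simp only [smul_eq_mul, zsmul_eq_mul, nsmul_eq_mul]); ring1))))
        A₀ * h2 - h2 * A₀ - α • h1 + α • h2
    -- [A₀, D₀] = -γ • B₀
    have g3 : A₀ * D₀ - D₀ * A₀ = -γ • B₀ := by
      linear_combination (norm := (noncomm_ring; all_goals (match_scalars; all_goals ((try simp only [smul_eq_mul, zsmul_eq_mul, nsmul_eq_mul]); ring1)))) h2 - h1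
    -- [B₀, D₀] = -δ • B₀
    have g5 : B₀ * D₀ - D₀ * B₀ = -δ • B₀ := by
      apply smul_right_injective (Module.End ℂ W) hγ
      linear_combination (norm := (noncomm_ring; all_goals (match_scalars; all_goals ((try simp only [smul_eq_mul, zsmul_eq_mul, nsmul_eq_mul]); ring1))))
        h2 * D₀ - D₀ * h2 - δ • h1 + δ • h2
    -- [A₀, C₀] = α • C₀ - γ • A₀
    have g2 : A₀ * C₀ - C₀ * A₀ = α • C₀ - γ • A₀ := by
      apply hcancel
      linear_combination (norm := (noncomm_ring; all_goals (match_scalars; all_goals ((try simp only [smul_eq_mul, zsmul_eq_mul, nsmul_eq_mul]); ring1))))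
        A₀ * h3 - h3 * A₀ - g1 * C₀ - γ • g1 + α • h2
          - (A₀ + α • (1 : Module.End ℂ W)) * h1 + A₀ * h2
    -- [B₀, C₀] = α • D₀ - δ • A₀
    have g4 : B₀ * C₀ - C₀ * B₀ = α • D₀ - δ • A₀ := by
      apply hcancel
      linear_combination (norm := (noncomm_ring; all_goals (match_scalars; all_goals ((try simp only [smul_eq_mul, zsmul_eq_mul, nsmul_eq_mul]); ring1))))
        B₀ * h3 - h3 * B₀ - g1 * D₀ - δ • g1
          + (A₀ + α • (1 : Module.End ℂ W)) * g5
    -- [C₀, D₀] = δ • C₀ - γ • D₀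
    have g6 : C₀ * D₀ - D₀ * C₀ = δ • C₀ - γ • D₀ := by
      apply hcancel
      linear_combination (norm := (noncomm_ring; all_goals (match_scalars; all_goals ((try simp only [smul_eq_mul, zsmul_eq_mul, nsmul_eq_mul]); ring1))))
        h3 * D₀ - D₀ * h3 - g5 * C₀ - h1 * D₀ + h2 * D₀
    refine ⟨⟨g1, g2, g3, g4, g5, g6⟩, ?_, ?_⟩
    · linear_combination (norm := (noncomm_ring; all_goals (match_scalars; all_goals ((try simp only [smul_eq_mul, zsmul_eq_mul, nsmul_eq_mul]); ring1)))) -h2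
    · linear_combination (norm := (noncomm_ring; all_goals (match_scalars; all_goals ((try simp only [smul_eq_mul, zsmul_eq_mul, nsmul_eq_mul]); ring1)))) -h3 + (1/2 : ℂ) • h2
end

section
/- Let u₀ ∈ ℂ, let j₋, j₊ ∈ ℤ ∪ {−∞, +∞} with j₋ + 1 < j₊, and set 𝒟 = {u₀ + m : m ∈ ℤ, j₋ < m < j₊}. Let W be a complex vector space spanned by linearly independent vectors F(u), u ∈ 𝒟. Let α, δ ∈ ℂ, let Δ₋, Δ₊ : ℂ → ℂ, and let A₀, D₀ be linear operators on W such that, writing A(u) = A₀ + αu·Id and D(u) = D₀ + δu·Id: A(u)F(u) = Δ₋(u−1/2) F(u−1) for all u ∈ 𝒟 with u−1 ∈ 𝒟, A(u₀+j₋+1)F(u₀+j₋+1) = 0 if j₋ is finite, D(u)F(u) = Δ₊(u+1/2) F(u+1) for all u ∈ 𝒟 with u+1 ∈ 𝒟, and D(u₀+j₊−1)F(u₀+j₊−1) = 0 if j₊ is finite. Assume there are Q₀, Q₁ ∈ ℂ such that Δ₊(u)Δ₋(u) = αδu² + Q₁u + Q₀ for all u ∈ (𝒟+1/2) ∩ (𝒟−1/2),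 and αδu² + Q₁u + Q₀ = 0 for u = u₀+j₊−1/2 (if j₊ finite) and for u = u₀+j₋+1/2 (if j₋ finite). Then: (1) [D₀,A₀] = αD₀ + δA₀ − Q₁·Id; (2) defining B₀ := αD₀ + δA₀ − Q₁·Id and defining C₀ as the linear operator with C₀F(u) = −u F(u) for all u ∈ 𝒟, one has B₀C₀ = (A₀ + α·Id)D₀ − ((1/4)αδ + (1/2)Q₁ + Q₀)·Id, and the six commutators [A₀,B₀] = −αB₀, [A₀,C₀] = αC₀ − A₀, [A₀,D₀] = −B₀, [B₀,C₀] = αD₀ − δA₀, [B₀,D₀] = −δB₀, [C₀,D₀] = δC₀ − D₀ hold. -/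
section Commutators

variable {K R : Type*} [CommRing K] [Ring R] [Algebra K R] {A B C D : R} {α δ Q₁ : K}

theorem comm_A_B_of_comm_D_A (hB : B = α • D + δ • A - Q₁ • 1) (hDA : D * A - A * D = B) :
    A * B - B * A = -α • B := by
  calc A * B - B * A = -α • (D * A - A * D) := by
        rw [hB]
        simp only [mul_add, add_mul, mul_sub, sub_mul, smul_mul_assoc, mul_smul_comm, one_mul,
          mul_one]
        module
    _ = -α • B := by rw [hDA]

theorem comm_B_D_of_comm_D_A (hB : B = α • D + δ • A - Q₁ • 1) (hDA : D * A - A * D = B) :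
    B * D - D * B = -δ • B := by
  calc B * D - D * B = -δ • (D * A - A * D) := by
        rw [hB]
        simp only [mul_add, add_mul, mul_sub, sub_mul, smul_mul_assoc, mul_smul_comm, one_mul,
          mul_one]
        module
    _ = -δ • B := by rw [hDA]

theorem comm_B_C_of_comm_A_C_of_comm_C_D (hB : B = α • D + δ • A - Q₁ • 1)
    (hAC : A * C - C * A = α • C - A) (hCD : C * D - D * C = δ • C - D) :
    B * C - C * B = α • D - δ • A := by
  calc B * C - C * B = δ • (A * C - C * A) - α • (C * D - D * C) := by
        rw [hB]
        simp only [add_mul, mul_add, sub_mul, mul_sub, smul_mul_assoc, mul_smul_comm, one_mul,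
          mul_one]
        module
    _ = α • D - δ • A := by
        rw [hAC, hCD]
        module

end Commutators

section Ladder

variable {K W : Type*} [Field K] [AddCommGroup W] [Module K W]
  {e : ℤ → W} {u₀ α δ Q₀ Q₁ : K} {a d : ℤ → K} {A C D : Module.End K W}

theorem ladder_comm_D_A [CharZero K] (he : Submodule.span K (Set.range e) = ⊤)
    (hA : ∀ n, A (e n) = a (n - 1) • e (n - 1) - (α * (u₀ + n)) • e n)
    (hD : ∀ n, D (e n) = d n • e (n + 1) - (δ * (u₀ + n)) • e n)
    (hdet : ∀ n, e n ≠ 0 ∨ e (n + 1) ≠ 0 →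
      d n * a n = α * δ * (u₀ + n + 1/2) ^ 2 + Q₁ * (u₀ + n + 1/2) + Q₀) :
    D * A - A * D = α • D + δ • A - Q₁ • 1 := by
  refine LinearMap.ext_on_range he fun n => ?_
  by_cases hn : e n = 0
  · simp [hn]
  have hup := hdet n (.inl hn)
  have hdown := hdet (n - 1) (.inr (by rwa [sub_add_cancel]))
  push_cast at hdown
  simp only [LinearMap.sub_apply, Module.End.mul_apply, LinearMap.add_apply, LinearMap.smul_apply,
    Module.End.one_apply, hA, hD, map_sub, map_smul, sub_add_cancel, add_sub_cancel_right,
    Int.cast_sub, Int.cast_add, Int.cast_one]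
  match_scalars
  · linear_combination hdown - hup
  · ring
  · ring

theorem ladder_B_mul_C [CharZero K] (he : Submodule.span K (Set.range e) = ⊤)
    (hA : ∀ n, A (e n) = a (n - 1) • e (n - 1) - (α * (u₀ + n)) • e n)
    (hD : ∀ n, D (e n) = d n • e (n + 1) - (δ * (u₀ + n)) • e n)
    (hC : ∀ n, C (e n) = (-(u₀ + n)) • e n)
    (hdet : ∀ n, e n ≠ 0 →
      d n * a n = α * δ * (u₀ + n + 1/2) ^ 2 + Q₁ * (u₀ + n + 1/2) + Q₀) :
    (α • D + δ • A - Q₁ • 1) * C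
      = (A + α • 1) * D - ((1/4 : K) * α * δ + (1/2 : K) * Q₁ + Q₀) • 1 := by
  refine LinearMap.ext_on_range he fun n => ?_
  by_cases hn : e n = 0
  · simp [hn]
  have hup := hdet n hn
  simp only [LinearMap.sub_apply, Module.End.mul_apply, LinearMap.add_apply, LinearMap.smul_apply,
    Module.End.one_apply, hA, hD, hC, map_sub, map_smul, add_sub_cancel_right,
    Int.cast_add, Int.cast_one]
  match_scalars
  · ring
  · linear_combination -hup
  · ring

theorem ladder_comm_A_C (he : Submodule.span K (Set.range e) = ⊤)
    (hA : ∀ n, A (e n) = a (n - 1) • e (n - 1) - (α * (u₀ + n)) • e n)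
    (hC : ∀ n, C (e n) = (-(u₀ + n)) • e n) :
    A * C - C * A = α • C - A := by
  refine LinearMap.ext_on_range he fun n => ?_
  simp only [LinearMap.sub_apply, Module.End.mul_apply, LinearMap.smul_apply, hA, hC, map_sub,
    map_smul, Int.cast_sub, Int.cast_one]
  match_scalars <;> ring

theorem ladder_comm_C_D (he : Submodule.span K (Set.range e) = ⊤)
    (hD : ∀ n, D (e n) = d n • e (n + 1) - (δ * (u₀ + n)) • e n)
    (hC : ∀ n, C (e n) = (-(u₀ + n)) • e n) :
    C * D - D * C = δ • C - D := by
  refine LinearMap.ext_on_range he fun n => ?_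
  simp only [LinearMap.sub_apply, Module.End.mul_apply, LinearMap.smul_apply, hD, hC, map_sub,
    map_smul, Int.cast_add, Int.cast_one]
  match_scalars <;> ring

end Ladder

abbrev intIoo (jm jp : EReal) : Set ℤ := intToE ⁻¹' Set.Ioo jm jp

abbrev intIooEdges (jm jp : EReal) : Set ℤ := {n | n ∈ intIoo jm jp ∧ n + 1 ∈ intIoo jm jp}

section Boundary

variable {jm jp : EReal} {n : ℤ}

theorem eq_intToE_of_succ_mem_of_not_mem (hjm : jm = ⊥ ∨ jm = ⊤ ∨ ∃ k : ℤ, jm = intToE k)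
    (hsucc : n + 1 ∈ intIoo jm jp) (hn : n ∉ intIoo jm jp) : jm = intToE n := by
  have hle : ¬ jm < intToE n := fun h =>
    hn ⟨h, (intToE_strictMono (lt_add_one n)).trans hsucc.2⟩
  rcases hjm with rfl | rfl | ⟨k, rfl⟩
  · exact absurd (EReal.bot_lt_coe _) hle
  · exact absurd hsucc.1 not_top_lt
  · have := hsucc.1
    rw [intToE_strictMono.lt_iff_lt] at this hle
    rw [show k = n by omega]

theorem eq_intToE_succ_of_mem_of_succ_not_mem (hjp : jp = ⊥ ∨ jp = ⊤ ∨ ∃ k : ℤ, jp = intToE k)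
    (hn : n ∈ intIoo jm jp) (hsucc : n + 1 ∉ intIoo jm jp) : jp = intToE (n + 1) := by
  have hle : ¬ intToE (n + 1) < jp := fun h =>
    hsucc ⟨hn.1.trans (intToE_strictMono (lt_add_one n)), h⟩
  rcases hjp with rfl | rfl | ⟨k, rfl⟩
  · exact absurd hn.2 not_lt_bot
  · exact absurd (EReal.coe_lt_top _) hle
  · have := hn.2
    rw [intToE_strictMono.lt_iff_lt] at this hle
    rw [show k = n + 1 by omega]

end Boundary

section ZeroExtension

variable {W : Type*} [AddCommGroup W] [Module ℂ W] {jm jp : EReal} {u₀ : ℂ} {F : ℂ → W}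

noncomputable def latticeVec (jm jp : EReal) (u₀ : ℂ) (F : ℂ → W) : ℤ → W :=
  (intIoo jm jp).indicator fun m => F (u₀ + m)

noncomputable def edgeCoeff (jm jp : EReal) (u₀ : ℂ) (Δ : ℂ → ℂ) : ℤ → ℂ :=
  (intIooEdges jm jp).indicator fun m => Δ (u₀ + m + 1/2)

theorem span_range_latticeVec
    (hspan : Submodule.span ℂ
      (Set.range (fun m : {m : ℤ // jm < intToE m ∧ intToE m < jp} => F (u₀ + (m : ℂ)))) = ⊤) :
    Submodule.span ℂ (Set.range (latticeVec jm jp u₀ F)) = ⊤ := by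
  refine eq_top_iff.2 (hspan.ge.trans (Submodule.span_mono ?_))
  rintro _ ⟨m, rfl⟩
  exact ⟨m, Set.indicator_of_mem (s := intIoo jm jp) m.2 _⟩

theorem lower_apply_latticeVec (hjm : jm = ⊥ ∨ jm = ⊤ ∨ ∃ k : ℤ, jm = intToE k)
    {α : ℂ} {Δminus : ℂ → ℂ} {A₀ : Module.End ℂ W}
    (hA : ∀ m : ℤ, jm < intToE m → intToE m < jp →
      jm < intToE (m - 1) → intToE (m - 1) < jp →
      A₀ (F (u₀ + (m : ℂ))) + (α * (u₀ + (m : ℂ))) • F (u₀ + (m : ℂ))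
        = Δminus (u₀ + (m : ℂ) - 1/2) • F (u₀ + (m : ℂ) - 1))
    (hAend : ∀ k : ℤ, jm = intToE k →
      A₀ (F (u₀ + (k : ℂ) + 1)) + (α * (u₀ + (k : ℂ) + 1)) • F (u₀ + (k : ℂ) + 1) = 0)
    (n : ℤ) :
    A₀ (latticeVec jm jp u₀ F n) = edgeCoeff jm jp u₀ Δminus (n - 1) • latticeVec jm jp u₀ F (n - 1)
      - (α * (u₀ + n)) • latticeVec jm jp u₀ F n := by
  unfold latticeVec edgeCoeff
  by_cases hn : n ∈ intIoo jm jp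
  swap
  · have : n - 1 ∉ intIooEdges jm jp := fun h => hn (by simpa using h.2)
    simp [Set.indicator_of_notMem hn, Set.indicator_of_notMem this]
  rw [eq_sub_iff_add_eq, Set.indicator_of_mem hn]
  by_cases hpred : n - 1 ∈ intIoo jm jp
  · have hedge : n - 1 ∈ intIooEdges jm jp := ⟨hpred, by simpa using hn⟩
    rw [Set.indicator_of_mem hpred, Set.indicator_of_mem hedge]
    convert hA n hn.1 hn.2 hpred.1 hpred.2 using 3 <;> push_cast <;> ring
  · have hbd := eq_intToE_of_succ_mem_of_not_mem hjm (by simpa using hn) hpred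
    rw [Set.indicator_of_notMem fun h => hpred h.1, zero_smul]
    have hu : u₀ + ((n - 1 : ℤ) : ℂ) + 1 = u₀ + n := by push_cast; ring
    simpa only [hu] using hAend (n - 1) hbd

theorem raise_apply_latticeVec (hjp : jp = ⊥ ∨ jp = ⊤ ∨ ∃ k : ℤ, jp = intToE k)
    {δ : ℂ} {Δplus : ℂ → ℂ} {D₀ : Module.End ℂ W}
    (hD : ∀ m : ℤ, jm < intToE m → intToE m < jp →
      jm < intToE (m + 1) → intToE (m + 1) < jp →
      D₀ (F (u₀ + (m : ℂ))) + (δ * (u₀ + (m : ℂ))) • F (u₀ + (m : ℂ))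
        = Δplus (u₀ + (m : ℂ) + 1/2) • F (u₀ + (m : ℂ) + 1))
    (hDend : ∀ k : ℤ, jp = intToE k →
      D₀ (F (u₀ + (k : ℂ) - 1)) + (δ * (u₀ + (k : ℂ) - 1)) • F (u₀ + (k : ℂ) - 1) = 0)
    (n : ℤ) :
    D₀ (latticeVec jm jp u₀ F n) = edgeCoeff jm jp u₀ Δplus n • latticeVec jm jp u₀ F (n + 1)
      - (δ * (u₀ + n)) • latticeVec jm jp u₀ F n := by
  unfold latticeVec edgeCoeff
  by_cases hn : n ∈ intIoo jm jp
  swap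
  · have : n ∉ intIooEdges jm jp := fun h => hn h.1
    simp [Set.indicator_of_notMem hn, Set.indicator_of_notMem this]
  rw [eq_sub_iff_add_eq, Set.indicator_of_mem hn]
  by_cases hsucc : n + 1 ∈ intIoo jm jp
  · have hedge : n ∈ intIooEdges jm jp := ⟨hn, hsucc⟩
    rw [Set.indicator_of_mem hsucc, Set.indicator_of_mem hedge]
    convert hD n hn.1 hn.2 hsucc.1 hsucc.2 using 3
    push_cast
    ring
  · have hbd := eq_intToE_succ_of_mem_of_succ_not_mem hjp hn hsucc
    rw [Set.indicator_of_notMem fun h => hsucc h.2, zero_smul]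
    have hu : u₀ + ((n + 1 : ℤ) : ℂ) - 1 = u₀ + n := by push_cast; ring
    simpa only [hu] using hDend (n + 1) hbd

theorem edgeCoeff_mul_edgeCoeff (hjm : jm = ⊥ ∨ jm = ⊤ ∨ ∃ k : ℤ, jm = intToE k)
    (hjp : jp = ⊥ ∨ jp = ⊤ ∨ ∃ k : ℤ, jp = intToE k)
    {α δ Q₀ Q₁ : ℂ} {Δminus Δplus : ℂ → ℂ}
    (hΔ : ∀ m : ℤ, jm < intToE m → intToE m < jp →
      jm < intToE (m + 1) → intToE (m + 1) < jp →
      Δplus (u₀ + (m : ℂ) + 1/2) * Δminus (u₀ + (m : ℂ) + 1/2)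
        = α * δ * (u₀ + (m : ℂ) + 1/2) ^ 2 + Q₁ * (u₀ + (m : ℂ) + 1/2) + Q₀)
    (hzp : ∀ k : ℤ, jp = intToE k →
      α * δ * (u₀ + (k : ℂ) - 1/2) ^ 2 + Q₁ * (u₀ + (k : ℂ) - 1/2) + Q₀ = 0)
    (hzm : ∀ k : ℤ, jm = intToE k →
      α * δ * (u₀ + (k : ℂ) + 1/2) ^ 2 + Q₁ * (u₀ + (k : ℂ) + 1/2) + Q₀ = 0)
    {n : ℤ} (hn : n ∈ intIoo jm jp ∨ n + 1 ∈ intIoo jm jp) :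
    edgeCoeff jm jp u₀ Δplus n * edgeCoeff jm jp u₀ Δminus n
      = α * δ * (u₀ + n + 1/2) ^ 2 + Q₁ * (u₀ + n + 1/2) + Q₀ := by
  unfold edgeCoeff
  by_cases hedge : n ∈ intIooEdges jm jp
  · rw [Set.indicator_of_mem hedge, Set.indicator_of_mem hedge]
    exact hΔ n hedge.1.1 hedge.1.2 hedge.2.1 hedge.2.2
  rw [Set.indicator_of_notMem hedge, zero_mul]
  rcases hn with hn | hsucc
  · have hbd := eq_intToE_succ_of_mem_of_succ_not_mem hjp hn fun h => hedge ⟨hn, h⟩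
    have hu : u₀ + ((n + 1 : ℤ) : ℂ) - 1/2 = u₀ + n + 1/2 := by push_cast; ring
    simpa only [hu] using (hzp (n + 1) hbd).symm
  · exact (hzm n (eq_intToE_of_succ_mem_of_not_mem hjm hsucc fun h => hedge ⟨h, hsucc⟩)).symm

end ZeroExtension

theorem stmt_5_general {W : Type*} [AddCommGroup W] [Module ℂ W]
    (u₀ : ℂ) (jm jp : EReal)
    (hjm : jm = ⊥ ∨ jm = ⊤ ∨ ∃ k : ℤ, jm = intToE k)
    (hjp : jp = ⊥ ∨ jp = ⊤ ∨ ∃ k : ℤ, jp = intToE k)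
    (F : ℂ → W)
    (hindep : LinearIndependent ℂ
      (fun m : {m : ℤ // jm < intToE m ∧ intToE m < jp} => F (u₀ + (m : ℂ))))
    (hspan : Submodule.span ℂ
      (Set.range (fun m : {m : ℤ // jm < intToE m ∧ intToE m < jp} => F (u₀ + (m : ℂ)))) = ⊤)
    (α δ Q₀ Q₁ : ℂ) (Δminus Δplus : ℂ → ℂ)
    (A₀ D₀ : Module.End ℂ W)
    (hA : ∀ m : ℤ, jm < intToE m → intToE m < jp →
      jm < intToE (m - 1) → intToE (m - 1) < jp →
      A₀ (F (u₀ + (m : ℂ))) + (α * (u₀ + (m : ℂ))) • F (u₀ + (m : ℂ))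
        = Δminus (u₀ + (m : ℂ) - 1/2) • F (u₀ + (m : ℂ) - 1))
    (hAend : ∀ k : ℤ, jm = intToE k →
      A₀ (F (u₀ + (k : ℂ) + 1)) + (α * (u₀ + (k : ℂ) + 1)) • F (u₀ + (k : ℂ) + 1) = 0)
    (hD : ∀ m : ℤ, jm < intToE m → intToE m < jp →
      jm < intToE (m + 1) → intToE (m + 1) < jp →
      D₀ (F (u₀ + (m : ℂ))) + (δ * (u₀ + (m : ℂ))) • F (u₀ + (m : ℂ))
        = Δplus (u₀ + (m : ℂ) + 1/2) • F (u₀ + (m : ℂ) + 1))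
    (hDend : ∀ k : ℤ, jp = intToE k →
      D₀ (F (u₀ + (k : ℂ) - 1)) + (δ * (u₀ + (k : ℂ) - 1)) • F (u₀ + (k : ℂ) - 1) = 0)
    (hΔ : ∀ m : ℤ, jm < intToE m → intToE m < jp →
      jm < intToE (m + 1) → intToE (m + 1) < jp →
      Δplus (u₀ + (m : ℂ) + 1/2) * Δminus (u₀ + (m : ℂ) + 1/2)
        = α * δ * (u₀ + (m : ℂ) + 1/2) ^ 2 + Q₁ * (u₀ + (m : ℂ) + 1/2) + Q₀)
    (hzp : ∀ k : ℤ, jp = intToE k →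
      α * δ * (u₀ + (k : ℂ) - 1/2) ^ 2 + Q₁ * (u₀ + (k : ℂ) - 1/2) + Q₀ = 0)
    (hzm : ∀ k : ℤ, jm = intToE k →
      α * δ * (u₀ + (k : ℂ) + 1/2) ^ 2 + Q₁ * (u₀ + (k : ℂ) + 1/2) + Q₀ = 0) :
    (D₀ * A₀ - A₀ * D₀ = α • D₀ + δ • A₀ - Q₁ • (1 : Module.End ℂ W)) ∧
    (∃ C₀ : Module.End ℂ W, ∀ m : ℤ, jm < intToE m → intToE m < jp →
      C₀ (F (u₀ + (m : ℂ))) = (-(u₀ + (m : ℂ))) • F (u₀ + (m : ℂ))) ∧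
    (∀ B₀ C₀ : Module.End ℂ W,
      B₀ = α • D₀ + δ • A₀ - Q₁ • (1 : Module.End ℂ W) →
      (∀ m : ℤ, jm < intToE m → intToE m < jp →
        C₀ (F (u₀ + (m : ℂ))) = (-(u₀ + (m : ℂ))) • F (u₀ + (m : ℂ))) →
      (B₀ * C₀ = (A₀ + α • (1 : Module.End ℂ W)) * D₀
          - ((1/4 : ℂ) * α * δ + (1/2 : ℂ) * Q₁ + Q₀) • (1 : Module.End ℂ W) ∧
       A₀ * B₀ - B₀ * A₀ = -α • B₀ ∧
       A₀ * C₀ - C₀ * A₀ = α • C₀ - A₀ ∧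
       A₀ * D₀ - D₀ * A₀ = -B₀ ∧
       B₀ * C₀ - C₀ * B₀ = α • D₀ - δ • A₀ ∧
       B₀ * D₀ - D₀ * B₀ = -δ • B₀ ∧
       C₀ * D₀ - D₀ * C₀ = δ • C₀ - D₀)) := by
  set e := latticeVec jm jp u₀ F
  have he := span_range_latticeVec hspan
  have hAe := lower_apply_latticeVec hjm hA hAend
  have hDe := raise_apply_latticeVec hjp hD hDend
  have hdet : ∀ n, e n ≠ 0 ∨ e (n + 1) ≠ 0 →
      edgeCoeff jm jp u₀ Δplus n * edgeCoeff jm jp u₀ Δminus n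
        = α * δ * (u₀ + n + 1/2) ^ 2 + Q₁ * (u₀ + n + 1/2) + Q₀ := fun n hn =>
    edgeCoeff_mul_edgeCoeff hjm hjp hΔ hzp hzm
      (hn.imp Set.mem_of_indicator_ne_zero Set.mem_of_indicator_ne_zero)
  have hDA := ladder_comm_D_A he hAe hDe hdet
  refine ⟨hDA, ?_, fun B₀ C₀ hB hC => ?_⟩
  · let b := Module.Basis.mk hindep hspan.ge
    refine ⟨b.constr ℂ fun m => (-(u₀ + ((m : ℤ) : ℂ))) • b m, fun m h₁ h₂ => ?_⟩
    simpa [b] using b.constr_basis ℂ _ ⟨m, h₁, h₂⟩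
  have hCe : ∀ n, C₀ (e n) = (-(u₀ + n)) • e n := fun n => by
    by_cases hn : n ∈ intIoo jm jp
    · simpa [e, latticeVec, Set.indicator_of_mem hn] using hC n hn.1 hn.2
    · simp [e, latticeVec, Set.indicator_of_notMem hn]
  have hAC := ladder_comm_A_C he hAe hCe
  have hCD := ladder_comm_C_D he hDe hCe
  rw [← hB] at hDA
  exact ⟨hB ▸ ladder_B_mul_C he hAe hDe hCe fun n hn => hdet n (.inl hn),
    comm_A_B_of_comm_D_A hB hDA, hAC, by rw [← hDA, neg_sub],
    comm_B_C_of_comm_A_C_of_comm_C_D hB hAC hCD, comm_B_D_of_comm_D_A hB hDA, hCD⟩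

/-- The Proposition of Section 5 of the paper (converse to Theorem 1): from a family
of linearly independent vectors F(u), u ∈ 𝒟 = {u₀ + m : m ∈ ℤ, j₋ < m < j₊},
spanning W, on which A(u) = A₀ + αu and D(u) = D₀ + δu act as parameter shifting
operators with quadratic quantum determinant Δ(u) = αδu² + Q₁u + Q₀, one
reconstructs operators B₀ and C₀ satisfying the rank-1 QISM I relations with
β = 0, γ = 1. -/
theorem stmt_5 {W : Type*} [AddCommGroup W] [Module ℂ W]
    (u₀ : ℂ) (jm jp : EReal)
    (hjm : jm = ⊥ ∨ jm = ⊤ ∨ ∃ k : ℤ, jm = intToE k)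
    (hjp : jp = ⊥ ∨ jp = ⊤ ∨ ∃ k : ℤ, jp = intToE k)
    (hlt : jm + 1 < jp)
    (F : ℂ → W)
    (hindep : LinearIndependent ℂ
      (fun m : {m : ℤ // jm < intToE m ∧ intToE m < jp} => F (u₀ + (m : ℂ))))
    (hspan : Submodule.span ℂ
      (Set.range (fun m : {m : ℤ // jm < intToE m ∧ intToE m < jp} => F (u₀ + (m : ℂ)))) = ⊤)
    (α δ Q₀ Q₁ : ℂ) (Δminus Δplus : ℂ → ℂ)
    (A₀ D₀ : Module.End ℂ W)
    (hA : ∀ m : ℤ, jm < intToE m → intToE m < jp →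
      jm < intToE (m - 1) → intToE (m - 1) < jp →
      A₀ (F (u₀ + (m : ℂ))) + (α * (u₀ + (m : ℂ))) • F (u₀ + (m : ℂ))
        = Δminus (u₀ + (m : ℂ) - 1/2) • F (u₀ + (m : ℂ) - 1))
    (hAend : ∀ k : ℤ, jm = intToE k →
      A₀ (F (u₀ + (k : ℂ) + 1)) + (α * (u₀ + (k : ℂ) + 1)) • F (u₀ + (k : ℂ) + 1) = 0)
    (hD : ∀ m : ℤ, jm < intToE m → intToE m < jp →
      jm < intToE (m + 1) → intToE (m + 1) < jp →
      D₀ (F (u₀ + (m : ℂ))) + (δ * (u₀ + (m : ℂ))) • F (u₀ + (m : ℂ))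
        = Δplus (u₀ + (m : ℂ) + 1/2) • F (u₀ + (m : ℂ) + 1))
    (hDend : ∀ k : ℤ, jp = intToE k →
      D₀ (F (u₀ + (k : ℂ) - 1)) + (δ * (u₀ + (k : ℂ) - 1)) • F (u₀ + (k : ℂ) - 1) = 0)
    (hΔ : ∀ m : ℤ, jm < intToE m → intToE m < jp →
      jm < intToE (m + 1) → intToE (m + 1) < jp →
      Δplus (u₀ + (m : ℂ) + 1/2) * Δminus (u₀ + (m : ℂ) + 1/2)
        = α * δ * (u₀ + (m : ℂ) + 1/2) ^ 2 + Q₁ * (u₀ + (m : ℂ) + 1/2) + Q₀)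
    (hzp : ∀ k : ℤ, jp = intToE k →
      α * δ * (u₀ + (k : ℂ) - 1/2) ^ 2 + Q₁ * (u₀ + (k : ℂ) - 1/2) + Q₀ = 0)
    (hzm : ∀ k : ℤ, jm = intToE k →
      α * δ * (u₀ + (k : ℂ) + 1/2) ^ 2 + Q₁ * (u₀ + (k : ℂ) + 1/2) + Q₀ = 0) :
    (D₀ * A₀ - A₀ * D₀ = α • D₀ + δ • A₀ - Q₁ • (1 : Module.End ℂ W)) ∧
    (∃ C₀ : Module.End ℂ W, ∀ m : ℤ, jm < intToE m → intToE m < jp →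
      C₀ (F (u₀ + (m : ℂ))) = (-(u₀ + (m : ℂ))) • F (u₀ + (m : ℂ))) ∧
    (∀ B₀ C₀ : Module.End ℂ W,
      B₀ = α • D₀ + δ • A₀ - Q₁ • (1 : Module.End ℂ W) →
      (∀ m : ℤ, jm < intToE m → intToE m < jp →
        C₀ (F (u₀ + (m : ℂ))) = (-(u₀ + (m : ℂ))) • F (u₀ + (m : ℂ))) →
      (B₀ * C₀ = (A₀ + α • (1 : Module.End ℂ W)) * D₀
          - ((1/4 : ℂ) * α * δ + (1/2 : ℂ) * Q₁ + Q₀) • (1 : Module.End ℂ W) ∧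
       A₀ * B₀ - B₀ * A₀ = -α • B₀ ∧
       A₀ * C₀ - C₀ * A₀ = α • C₀ - A₀ ∧
       A₀ * D₀ - D₀ * A₀ = -B₀ ∧
       B₀ * C₀ - C₀ * B₀ = α • D₀ - δ • A₀ ∧
       B₀ * D₀ - D₀ * B₀ = -δ • B₀ ∧
       C₀ * D₀ - D₀ * C₀ = δ • C₀ - D₀)) :=
  stmt_5_general u₀ jm jp hjm hjp F hindep hspan α δ Q₀ Q₁ Δminus Δplus A₀ D₀ hA hAend hD hDend hΔ
    hzp hzm
end

section
/- Let W be a complex vector space, let δ, Q₀, Q₂ ∈ ℂ, and let A₀, A₁, B₀, C₀ be linear operators on W with B₀ injective. Then the following two statements are equivalent. (b): the six commutators [A₁,A₀] = B₀, [A₁,B₀] = 0, [A₁,C₀] = −2A₀ + 2A₁, [A₀,B₀] = −{A₁,B₀}, [A₀,C₀] = {A₁,C₀} + (−2A₀ + (5/2)A₁ − 2δ·Id), [B₀,C₀] = −2{A₀,A₁} + 4A₁² hold, together with A₁² − B₀ = Q₂·Id and −A₀² − B₀C₀ + 2δA₁ − (1/4)B₀ = Q₀·Id. (c): the three equalities [A₁,A₀]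 = A₁² − Q₂·Id, B₀ = A₁² − Q₂·Id, and B₀C₀ = 2δA₁ − A₀² − (1/4)B₀ − Q₀·Id hold. -/
/-- Lemma 7 (b) ⟺ (c) of the paper: rank-1 unitary QISM II relations with
α = β = 0, γ = 1. -/
theorem stmt_6 {W : Type*} [AddCommGroup W] [Module ℂ W]
    (δ Q₀ Q₂ : ℂ)
    (A₀ A₁ B₀ C₀ : Module.End ℂ W) (hB₀ : Function.Injective B₀) :
    ((A₁ * A₀ - A₀ * A₁ = B₀ ∧
      A₁ * B₀ - B₀ * A₁ = 0 ∧
      A₁ * C₀ - C₀ * A₁ = -(2 : ℂ) • A₀ + (2 : ℂ) • A₁ ∧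
      A₀ * B₀ - B₀ * A₀ = -(A₁ * B₀ + B₀ * A₁) ∧
      A₀ * C₀ - C₀ * A₀ = (A₁ * C₀ + C₀ * A₁)
        + (-(2 : ℂ) • A₀ + (5/2 : ℂ) • A₁ - (2 * δ) • (1 : Module.End ℂ W)) ∧
      B₀ * C₀ - C₀ * B₀ = -(2 : ℂ) • (A₀ * A₁ + A₁ * A₀) + (4 : ℂ) • (A₁ * A₁)) ∧
     A₁ * A₁ - B₀ = Q₂ • (1 : Module.End ℂ W) ∧
     -(A₀ * A₀) - B₀ * C₀ + (2 * δ) • A₁ - (1/4 : ℂ) • B₀ = Q₀ • (1 : Module.End ℂ W))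
    ↔
    (A₁ * A₀ - A₀ * A₁ = A₁ * A₁ - Q₂ • (1 : Module.End ℂ W) ∧
     B₀ = A₁ * A₁ - Q₂ • (1 : Module.End ℂ W) ∧
     B₀ * C₀ = (2 * δ) • A₁ - A₀ * A₀ - (1/4 : ℂ) • B₀ - Q₀ • (1 : Module.End ℂ W)) := by
  constructor
  · rintro ⟨⟨b1, b2, b3, b4, b5, b6⟩, b7, b8⟩
    have hc2 : B₀ = A₁ * A₁ - Q₂ • (1 : Module.End ℂ W) := by rw [← b7]; module
    refine ⟨b1.trans hc2, hc2, ?_⟩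
    rw [← b8]; module
  · rintro ⟨c1, c2, c3⟩
    have hcancel : ∀ X Y : Module.End ℂ W, B₀ * X = B₀ * Y → X = Y := by
      intro X Y h
      ext w
      apply hB₀
      simpa [Module.End.mul_apply] using DFunLike.congr_fun h w
    -- swap rules in terms of A₀, A₁ only
    have s1 : A₁ * A₀ = A₀ * A₁ + (A₁ * A₁ - Q₂ • (1 : Module.End ℂ W)) := by
      rw [← c1]; module
    have s2 : ∀ x, A₁ * (A₀ * x) = A₀ * (A₁ * x) + (A₁ * (A₁ * x) - Q₂ • x) := by
      intro x
      rw [← mul_assoc, s1]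
      simp only [add_mul, sub_mul, mul_assoc, smul_mul_assoc, one_mul]
    have hb : A₁ * B₀ = B₀ * A₁ := by
      rw [c2]
      simp only [mul_sub, sub_mul, mul_assoc, smul_mul_assoc, mul_smul_comm, one_mul, mul_one]
    have hb2 : ∀ x, B₀ * (A₁ * x) = A₁ * (B₀ * x) := by
      intro x; rw [← mul_assoc, ← hb, mul_assoc]
    have ha : B₀ * A₀ = A₀ * B₀ + (2 : ℂ) • (A₁ * B₀) := by
      rw [c2]
      simp only [mul_sub, sub_mul, mul_add, add_mul, mul_assoc, smul_mul_assoc,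
        mul_smul_comm, one_mul, mul_one, s1, s2, smul_add, smul_sub]
      module
    have ha2 : ∀ x, B₀ * (A₀ * x) = A₀ * (B₀ * x) + (2 : ℂ) • (A₁ * (B₀ * x)) := by
      intro x
      rw [← mul_assoc, ha]
      simp only [add_mul, mul_assoc, smul_mul_assoc]
    have hE2 : ∀ x, B₀ * (C₀ * x) = ((2 * δ) • A₁ - A₀ * A₀ - (1/4 : ℂ) • B₀
        - Q₀ • (1 : Module.End ℂ W)) * x := by
      intro x; rw [← mul_assoc, c3]
    refine ⟨⟨c1.trans c2.symm, by rw [hb]; abel, ?_, ?_, ?_, ?_⟩, by rw [c2]; module, by rw [c3]; module⟩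
    · -- [A₁, C₀]
      apply hcancel
      simp only [mul_sub, mul_add, mul_neg, mul_smul_comm, mul_one, mul_assoc]
      simp only [hb2, ha2, hE2, c3]
      simp only [c2]
      simp only [mul_sub, sub_mul, mul_add, add_mul, mul_assoc, smul_mul_assoc,
        mul_smul_comm, one_mul, mul_one, s1, s2, smul_add, smul_sub, smul_smul]
      module
    · -- [A₀, B₀]
      rw [hb, c2]
      simp only [mul_sub, sub_mul, mul_add, add_mul, mul_assoc, smul_mul_assoc,
        mul_smul_comm, one_mul, mul_one, s1, s2, smul_add, smul_sub, smul_smul]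
      module
    · -- [A₀, C₀]
      apply hcancel
      simp only [mul_sub, mul_add, mul_neg, mul_smul_comm, mul_one, mul_assoc]
      simp only [hb2, ha2, hE2, c3]
      simp only [c2]
      simp only [mul_sub, sub_mul, mul_add, add_mul, mul_assoc, smul_mul_assoc,
        mul_smul_comm, one_mul, mul_one, s1, s2, smul_add, smul_sub, smul_smul]
      module
    · -- [B₀, C₀]
      apply hcancel
      simp only [mul_sub, mul_add, mul_neg, mul_smul_comm, mul_one, mul_assoc]
      simp only [hb2, ha2, hE2, c3]
      simp only [c2]
      simp only [mul_sub, sub_mul, mul_add, add_mul, mul_assoc, smul_mul_assoc,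
        mul_smul_comm, one_mul, mul_one, s1, s2, smul_add, smul_sub, smul_smul]
      module
end

section
/- Let I ⊆ ℝ be an open interval, let A₀₁, A₀₀, D₀₁, D₀₀ : I → ℂ be differentiable functions, and let α, δ, Q₁ ∈ ℂ. Define the first order differential operators A₀ and D₀ acting on smooth functions f : I → ℂ by (A₀ f)(x) = A₀₁(x) f′(x) + A₀₀(x) f(x) and (D₀ f)(x) = D₀₁(x) f′(x) + D₀₀(x) f(x). Then the operator identity D₀(A₀ f) − A₀(D₀ f) = δ·(A₀ f) + α·(D₀ f) − Q₁·f, for all smooth f : I → ℂ, holds if and only if the two pointwise identities D₀₁(x)A₀₁′(x) − A₀₁(x)D₀₁′(x) = δA₀₁(x) + αD₀₁(x) and D₀₁(x)A₀₀′(x) − A₀₁(x)D₀₀′(x) = δA₀₀(x) + αD₀₀(x) − Q₁ hold for all x ∈ I. -/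
/-- The first order differential operator `p(x)∂ₓ + q(x)` acting on functions ℝ → ℂ. -/
noncomputable def firstOrderOp (p q : ℝ → ℂ) (f : ℝ → ℂ) : ℝ → ℂ :=
  fun x => p x * deriv f x + q x * f x

lemma ofReal_hasDerivAt (x : ℝ) : HasDerivAt (fun t : ℝ => (t : ℂ)) 1 x := by
  simpa using (hasDerivAt_id x).ofReal_comp

lemma deriv_fOp (p q f : ℝ → ℂ) (x : ℝ) (hp : DifferentiableAt ℝ p x)
    (hq : DifferentiableAt ℝ q x) (hf : DifferentiableAt ℝ f x)
    (hf' : DifferentiableAt ℝ (deriv f) x) :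
    deriv (firstOrderOp p q f) x
      = deriv p x * deriv f x + p x * deriv (deriv f) x
        + (deriv q x * f x + q x * deriv f x) := by
  unfold firstOrderOp
  exact ((hp.hasDerivAt.mul hf'.hasDerivAt).add (hq.hasDerivAt.mul hf.hasDerivAt)).deriv

/-- Lemma 2 of the paper (second equivalence): for first order differential operators
A₀ = A₀₁(x)∂ₓ + A₀₀(x) and D₀ = D₀₁(x)∂ₓ + D₀₀(x) on an open interval I, the
commutator relation [D₀,A₀] = δA₀ + αD₀ − Q₁ holds on all smooth functions iff the
coefficient functions satisfy the two first order differential equations. -/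
theorem stmt_8 (I : Set ℝ) (hIopen : IsOpen I) (hIconn : I.OrdConnected)
    (A01 A00 D01 D00 : ℝ → ℂ)
    (hA01 : ∀ x ∈ I, DifferentiableAt ℝ A01 x)
    (hA00 : ∀ x ∈ I, DifferentiableAt ℝ A00 x)
    (hD01 : ∀ x ∈ I, DifferentiableAt ℝ D01 x)
    (hD00 : ∀ x ∈ I, DifferentiableAt ℝ D00 x)
    (α δ Q₁ : ℂ) :
    (∀ f : ℝ → ℂ, ContDiffOn ℝ (⊤ : ℕ∞) f I → ∀ x ∈ I,
        firstOrderOp D01 D00 (firstOrderOp A01 A00 f) x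
          - firstOrderOp A01 A00 (firstOrderOp D01 D00 f) x
        = δ * firstOrderOp A01 A00 f x + α * firstOrderOp D01 D00 f x - Q₁ * f x)
    ↔ (∀ x ∈ I,
        D01 x * deriv A01 x - A01 x * deriv D01 x = δ * A01 x + α * D01 x ∧
        D01 x * deriv A00 x - A01 x * deriv D00 x = δ * A00 x + α * D00 x - Q₁) := by
  constructor
  · intro h x hx
    -- test with constant function 1
    have h1 := h (fun _ => (1:ℂ)) contDiffOn_const x hx
    have e1 : firstOrderOp A01 A00 (fun _ => (1:ℂ)) = A00 := by
      funext y; simp [firstOrderOp]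
    have e1' : firstOrderOp D01 D00 (fun _ => (1:ℂ)) = D00 := by
      funext y; simp [firstOrderOp]
    rw [e1, e1'] at h1
    simp only [firstOrderOp, deriv_const', mul_zero, mul_one, zero_add] at h1
    -- h1 : D01 x * deriv A00 x + D00 x * A00 x - (A01 x * deriv D00 x + A00 x * D00 x) = ...
    have eq2 : D01 x * deriv A00 x - A01 x * deriv D00 x = δ * A00 x + α * D00 x - Q₁ := by
      have := h1; ring_nf at this ⊢; linear_combination this
    refine ⟨?_, eq2⟩
    -- test with the inclusion ℝ → ℂ
    have hdf : ∀ y : ℝ, DifferentiableAt ℝ (fun t : ℝ => (t : ℂ)) y :=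
      fun y => (ofReal_hasDerivAt y).differentiableAt
    have hderiv : deriv (fun t : ℝ => (t : ℂ)) = fun _ => (1:ℂ) := by
      funext y; exact (ofReal_hasDerivAt y).deriv
    have h2 := h (fun t : ℝ => (t : ℂ)) Complex.ofRealCLM.contDiff.contDiffOn x hx
    have e2 : firstOrderOp A01 A00 (fun t : ℝ => (t : ℂ))
        = fun y => A01 y + A00 y * y := by
      funext y; simp [firstOrderOp, hderiv]
    have e2' : firstOrderOp D01 D00 (fun t : ℝ => (t : ℂ))
        = fun y => D01 y + D00 y * y := by
      funext y; simp [firstOrderOp, hderiv]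
    rw [e2, e2'] at h2
    have dA : deriv (fun y : ℝ => A01 y + A00 y * (y:ℂ)) x
        = deriv A01 x + (deriv A00 x * x + A00 x * 1) :=
      ((hA01 x hx).hasDerivAt.add ((hA00 x hx).hasDerivAt.mul (ofReal_hasDerivAt x))).deriv
    have dD : deriv (fun y : ℝ => D01 y + D00 y * (y:ℂ)) x
        = deriv D01 x + (deriv D00 x * x + D00 x * 1) :=
      ((hD01 x hx).hasDerivAt.add ((hD00 x hx).hasDerivAt.mul (ofReal_hasDerivAt x))).deriv
    simp only [firstOrderOp, dA, dD] at h2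
    linear_combination h2 - (x:ℂ) * eq2
  · intro h f hf x hx
    obtain ⟨eq1, eq2⟩ := h x hx
    have hxI : I ∈ nhds x := hIopen.mem_nhds hx
    have hdf : DifferentiableAt ℝ f x :=
      ((hf.differentiableOn (by norm_num)).differentiableAt hxI)
    have hcd : ContDiffOn ℝ 1 (deriv f) I :=
      hf.deriv_of_isOpen hIopen (WithTop.coe_le_coe.mpr le_top)
    have hdf' : DifferentiableAt ℝ (deriv f) x :=
      (hcd.differentiableOn (by norm_num)).differentiableAt hxI
    have dAf := deriv_fOp A01 A00 f x (hA01 x hx) (hA00 x hx) hdf hdf'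
    have dDf := deriv_fOp D01 D00 f x (hD01 x hx) (hD00 x hx) hdf hdf'
    simp only [firstOrderOp] at dAf dDf ⊢
    rw [dAf, dDf]
    linear_combination deriv f x * eq1 + f x * eq2
end

section
/- Let 𝒜 be an associative unital ℂ-algebra (for instance the endomorphism algebra of a complex vector space), let α, γ, δ, Q₁ ∈ ℂ with γ ≠ 0, and let A₀, B₀, C₀, D₀ ∈ 𝒜 satisfy the six commutators [A₀,B₀] = −αB₀, [A₀,C₀] = αC₀ − γA₀, [A₀,D₀] = −γB₀, [B₀,C₀] = αD₀ − δA₀, [B₀,D₀] = −δB₀, [C₀,D₀] = δC₀ − γD₀, together with αD₀ − γB₀ + δA₀ = Q₁·1. Define J³ := −γ⁻¹C₀, J⁻ := A₀ − αγ⁻¹C₀, J⁺ := D₀ − δγ⁻¹C₀. Then [J³, J⁻] = −J⁻, [J³, J⁺] = J⁺, and [J⁻, J⁺] = 2αδ·J³ + Q₁·1. -/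
/-- Remark 2 of the paper: the algebra generated by A₀, C₀, D₀ (part of a rank-1
QISM I L-operator with β = 0, γ ≠ 0) gives Miller's four-dimensional Lie algebra
𝒢(a,b) with a² = −αδ and b = Q₁. -/
theorem stmt_10 {𝒜 : Type*} [Ring 𝒜] [Algebra ℂ 𝒜]
    (α γ δ Q₁ : ℂ) (hγ : γ ≠ 0) (A₀ B₀ C₀ D₀ : 𝒜)
    (h1 : A₀ * B₀ - B₀ * A₀ = -α • B₀)
    (h2 : A₀ * C₀ - C₀ * A₀ = α • C₀ - γ • A₀)
    (h3 : A₀ * D₀ - D₀ * A₀ = -γ • B₀)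
    (h4 : B₀ * C₀ - C₀ * B₀ = α • D₀ - δ • A₀)
    (h5 : B₀ * D₀ - D₀ * B₀ = -δ • B₀)
    (h6 : C₀ * D₀ - D₀ * C₀ = δ • C₀ - γ • D₀)
    (h7 : α • D₀ - γ • B₀ + δ • A₀ = Q₁ • (1 : 𝒜))
    (J3 Jm Jp : 𝒜)
    (hJ3 : J3 = -γ⁻¹ • C₀)
    (hJm : Jm = A₀ - (α * γ⁻¹) • C₀)
    (hJp : Jp = D₀ - (δ * γ⁻¹) • C₀) :
    J3 * Jm - Jm * J3 = -Jm ∧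
    J3 * Jp - Jp * J3 = Jp ∧
    Jm * Jp - Jp * Jm = (2 * α * δ) • J3 + Q₁ • (1 : 𝒜) := by
  subst hJ3 hJm hJp
  rw [← h7]
  have hAC : A₀ * C₀ = C₀ * A₀ + (α • C₀ - γ • A₀) := by rw [← h2]; abel
  have hAD : A₀ * D₀ = D₀ * A₀ + (-γ • B₀) := by rw [← h3]; abel
  have hCD : C₀ * D₀ = D₀ * C₀ + (δ • C₀ - γ • D₀) := by rw [← h6]; abel
  have hγγ : γ⁻¹ * γ = 1 := inv_mul_cancel₀ hγ
  refine ⟨?_, ?_, ?_⟩ <;>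
  · simp only [mul_sub, sub_mul, smul_mul_assoc, mul_smul_comm, smul_smul, neg_smul,
      neg_mul, mul_neg, smul_sub, smul_add, hAC, hAD, hCD]
    match_scalars <;> field_simp <;> ring
end

section
/- Let 𝒜 be an associative unital ℂ-algebra and let P⁺, P⁻, P³, J⁺, J⁻, J³ ∈ 𝒜 satisfy the e(3) commutation relations: [J³,J⁺] = J⁺, [J³,J⁻] = −J⁻, [J³,P⁺] = P⁺, [J³,P⁻] = −P⁻, [P³,J⁺] = P⁺, [P³,J⁻] = −P⁻, [J⁺,P⁺] = [J⁻,P⁻] = [J³,P³] = 0, [J⁺,J⁻] = 2J³, [J⁺,P⁻] = 2P³, [P⁺,J⁻] = 2P³, [P³,P⁺] = [P³,P⁻] = [P⁺,P⁻] = 0. Define C̃ := (1/2)(P⁺J⁻ + P⁻J⁺) + P³J³, A₀ := (1/2)(P⁺J⁻ − P⁻J⁺), A₁ := P³, B₀ := −P⁺P⁻, C₀ := −(1/2)(J⁺J⁻ + J⁻J⁺) − (J³)² − (1/4)·1, and δ := −C̃J³. Then δ commutes with each of A₀, A₁, B₀, C₀, and the six relations hold: [A₁,A₀] = B₀, [A₁,B₀]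 = 0, [A₁,C₀] = −2A₀ + 2A₁, [A₀,B₀] = −{A₁,B₀}, [A₀,C₀] = {A₁,C₀} + (−2A₀ + (5/2)A₁ − 2δ), [B₀,C₀] = −2{A₀,A₁} + 4A₁². -/

private lemma swap_aux {𝒜 : Type*} [Ring 𝒜] {X Y c : 𝒜} (h : X * Y = Y * X + c) (z : 𝒜) :
    X * (Y * z) = Y * (X * z) + c * z := by
  rw [← mul_assoc, h, add_mul, mul_assoc]

private lemma swap0_aux {𝒜 : Type*} [Ring 𝒜] {X Y : 𝒜} (h : X * Y = Y * X) (z : 𝒜) :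
    X * (Y * z) = Y * (X * z) := by
  rw [← mul_assoc, h, mul_assoc]

/-- Remark 3 of the paper: the elements A₀ = (1/2)(P⁺J⁻ − P⁻J⁺), A₁ = P³,
B₀ = −P⁺P⁻, C₀ = −(1/2){J⁺,J⁻} − (J³)² − 1/4, δ = −C̃J³ of (the universal
enveloping algebra of) e(3) satisfy the rank-1 unitary QISM II relations with
α = β = 0, γ = 1 and with δ central. -/
theorem stmt_11 {𝒜 : Type*} [Ring 𝒜] [Algebra ℂ 𝒜]
    (Pp Pm P3 Jp Jm J3 : 𝒜)
    (e1 : J3 * Jp - Jp * J3 = Jp)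
    (e2 : J3 * Jm - Jm * J3 = -Jm)
    (e3 : J3 * Pp - Pp * J3 = Pp)
    (e4 : J3 * Pm - Pm * J3 = -Pm)
    (e5 : P3 * Jp - Jp * P3 = Pp)
    (e6 : P3 * Jm - Jm * P3 = -Pm)
    (e7 : Jp * Pp - Pp * Jp = 0)
    (e8 : Jm * Pm - Pm * Jm = 0)
    (e9 : J3 * P3 - P3 * J3 = 0)
    (e10 : Jp * Jm - Jm * Jp = (2 : ℂ) • J3)
    (e11 : Jp * Pm - Pm * Jp = (2 : ℂ) • P3)
    (e12 : Pp * Jm - Jm * Pp = (2 : ℂ) • P3)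
    (e13 : P3 * Pp - Pp * P3 = 0)
    (e14 : P3 * Pm - Pm * P3 = 0)
    (e15 : Pp * Pm - Pm * Pp = 0)
    (Ct A₀ A₁ B₀ C₀ δ : 𝒜)
    (hCt : Ct = (1/2 : ℂ) • (Pp * Jm + Pm * Jp) + P3 * J3)
    (hA₀ : A₀ = (1/2 : ℂ) • (Pp * Jm - Pm * Jp))
    (hA₁ : A₁ = P3)
    (hB₀ : B₀ = -(Pp * Pm))
    (hC₀ : C₀ = -(1/2 : ℂ) • (Jp * Jm + Jm * Jp) - J3 * J3 - (1/4 : ℂ) • (1 : 𝒜))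
    (hδ : δ = -(Ct * J3)) :
    (δ * A₀ = A₀ * δ ∧ δ * A₁ = A₁ * δ ∧ δ * B₀ = B₀ * δ ∧ δ * C₀ = C₀ * δ) ∧
    A₁ * A₀ - A₀ * A₁ = B₀ ∧
    A₁ * B₀ - B₀ * A₁ = 0 ∧
    A₁ * C₀ - C₀ * A₁ = -(2 : ℂ) • A₀ + (2 : ℂ) • A₁ ∧
    A₀ * B₀ - B₀ * A₀ = -(A₁ * B₀ + B₀ * A₁) ∧
    A₀ * C₀ - C₀ * A₀ = (A₁ * C₀ + C₀ * A₁)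
      + (-(2 : ℂ) • A₀ + (5/2 : ℂ) • A₁ - (2 : ℂ) • δ) ∧
    B₀ * C₀ - C₀ * B₀ = -(2 : ℂ) • (A₀ * A₁ + A₁ * A₀) + (4 : ℂ) • (A₁ * A₁) := by

  have r1 : Pm * Pp = Pp * Pm := (sub_eq_zero.mp e15).symm
  have r2 : P3 * Pp = Pp * P3 := sub_eq_zero.mp e13
  have r3 : P3 * Pm = Pm * P3 := sub_eq_zero.mp e14
  have r4 : Jp * Pp = Pp * Jp := sub_eq_zero.mp e7
  have r5 : Jp * Pm = Pm * Jp + (2 : ℂ) • P3 := sub_eq_iff_eq_add'.mp e11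
  have r6 : Jp * P3 = P3 * Jp + -Pp := by rw [← sub_eq_iff_eq_add', ← neg_sub, e5]
  have r7 : Jm * Pp = Pp * Jm + -((2 : ℂ) • P3) := by rw [← sub_eq_iff_eq_add', ← neg_sub, e12]
  have r8 : Jm * Pm = Pm * Jm := sub_eq_zero.mp e8
  have r9 : Jm * P3 = P3 * Jm + Pm := by rw [← sub_eq_iff_eq_add', ← neg_sub, e6, neg_neg]
  have r10 : Jm * Jp = Jp * Jm + -((2 : ℂ) • J3) := by rw [← sub_eq_iff_eq_add', ← neg_sub, e10]
  have r11 : J3 * Pp = Pp * J3 + Pp := sub_eq_iff_eq_add'.mp e3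
  have r12 : J3 * Pm = Pm * J3 + -Pm := sub_eq_iff_eq_add'.mp e4
  have r13 : J3 * P3 = P3 * J3 := sub_eq_zero.mp e9
  have r14 : J3 * Jp = Jp * J3 + Jp := sub_eq_iff_eq_add'.mp e1
  have r15 : J3 * Jm = Jm * J3 + -Jm := sub_eq_iff_eq_add'.mp e2
  subst hCt hA₀ hA₁ hB₀ hC₀ hδ
  refine ⟨⟨?_, ?_, ?_, ?_⟩, ?_, ?_, ?_, ?_, ?_, ?_⟩ <;>
  · simp only [mul_add, add_mul, mul_sub, sub_mul, neg_mul, mul_neg, neg_neg,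
      smul_mul_assoc, mul_smul_comm, smul_add, smul_sub, smul_neg, mul_one, one_mul,
      mul_assoc,
      r1, swap0_aux r1, r2, swap0_aux r2, r3, swap0_aux r3, r4, swap0_aux r4,
      r5, swap_aux r5, r6, swap_aux r6, r7, swap_aux r7, r8, swap0_aux r8,
      r9, swap_aux r9, r10, swap_aux r10, r11, swap_aux r11, r12, swap_aux r12,
      r13, swap0_aux r13, r14, swap_aux r14, r15, swap_aux r15]
    module
end

section
/- Let a, b, c, u ∈ ℂ with c+u and c+u−1 not nonpositive integers. Let G(x) := (1−x)^{a+u}·F(a+u, b+u; c+u; x), where (1−x)^{a+u} is the principal branch (well defined since Re(1−x) > 0 for |x| < 1). Then for every complex x with |x| < 1: x·G′(x) + (−(b−c)/(1−x) + b − 1 + u)·G(x) = (c+u−1)·(1−x)^{a+u−1}·F(a+u−1, b+u−1; c+u−1; x). -/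
/-- The Gauss hypergeometric series F(a,b;c;x) = ∑ (a)ₖ(b)ₖ/((c)ₖ k!) xᵏ. -/
noncomputable def gauss2F1 (a b c x : ℂ) : ℂ :=
  ∑' k : ℕ, ((ascPochhammer ℂ k).eval a * (ascPochhammer ℂ k).eval b)
    / ((ascPochhammer ℂ k).eval c * (Nat.factorial k : ℂ)) * x ^ k

/-!
`gauss2F1` is Mathlib's `₂F₁`, whose series has radius of convergence at least `1` as soon as
`c` is not a nonpositive integer. Comparing the coefficients of `xⁿ⁺¹`, which only needs the
ratios of consecutive Pochhammer coefficients, gives the contiguous relation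
`(1 - x) x F' + (c - 1 - (a + b - 1) x) F = (c - 1) F(a - 1, b - 1; c - 1)`.
The theorem is this relation at the parameters shifted by `u`, multiplied by `(1 - x)^(a+u-1)`
once the product rule has been applied to `(1 - x)^(a+u) F`.
-/

open FormalMultilinearSeries ENNReal

theorem gauss2F1_eq_ordinaryHypergeometric (a b c : ℂ) : gauss2F1 a b c = ₂F₁ a b c := by
  ext x
  rw [ordinaryHypergeometric_eq_tsum, gauss2F1]
  congr! 2 with k
  rw [smul_eq_mul, div_eq_mul_inv, mul_inv]
  ring

theorem ascPochhammer_succ_left_eval {S : Type*} [CommSemiring S] (n : ℕ) (s : S) :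
    (ascPochhammer S (n + 1)).eval s = s * (ascPochhammer S n).eval (s + 1) := by
  simp [ascPochhammer_succ_left, Polynomial.eval_comp]

theorem ne_neg_natCast_of_sub_one_ne {R : Type*} [CommRing R] {c : R}
    (hc : ∀ n : ℕ, c - 1 ≠ -(n : R)) (n : ℕ) : c ≠ -(n : R) :=
  fun h ↦ hc (n + 1) (by rw [h]; push_cast; ring)

theorem HasSum.sub_eq_of_shift {E : Type*} [AddCommGroup E] [TopologicalSpace E]
    [IsTopologicalAddGroup E] [T2Space E] {u v w : ℕ → E} {U V W : E}
    (hu : HasSum u U) (hv : HasSum v V) (hw : HasSum w W) (h0 : w 0 = u 0)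
    (hsucc : ∀ n, w (n + 1) = u (n + 1) - v n) : U - V = W := by
  have hu' := ((hasSum_nat_add_iff' 1).mpr hu).sub hv
  have hw' := (hasSum_nat_add_iff' 1).mpr hw
  simp only [Finset.range_one, Finset.sum_singleton, ← hsucc] at hu' hw'
  have := hw'.unique hu'
  rw [h0] at this
  linear_combination (norm := abel_nf) -this

section PowerSeries

variable {𝕜 : Type*} [NontriviallyNormedField 𝕜] {f : 𝕜 → 𝕜} {c : ℕ → 𝕜} {r : ℝ≥0∞} {x : 𝕜}

theorem HasFPowerSeriesOnBall.hasSum_ofScalars (hf : HasFPowerSeriesOnBall f (ofScalars 𝕜 c) 0 r)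
    (hx : x ∈ Metric.eball 0 r) : HasSum (fun n ↦ c n * x ^ n) (f x) := by
  simpa only [ofScalars_apply_eq, smul_eq_mul, zero_add] using hf.hasSum hx

theorem HasFPowerSeriesOnBall.hasSum_mul_deriv_ofScalars [CompleteSpace 𝕜]
    (hf : HasFPowerSeriesOnBall f (ofScalars 𝕜 c) 0 r) (hx : x ∈ Metric.eball 0 r) :
    HasSum (fun n ↦ n * c n * x ^ n) (x * deriv f x) := by
  have h := (ContinuousLinearMap.apply 𝕜 𝕜 x).hasSum (hf.fderiv.hasSum hx)
  rw [← hasSum_nat_add_iff' 1]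
  convert h using 1
  · ext n
    rw [ContinuousLinearMap.apply_apply, derivSeries_apply_diag, ofScalars_apply_eq, nsmul_eq_mul,
      smul_eq_mul]
    push_cast
    ring
  · simp [mul_comm x]

end PowerSeries

section Hypergeometric

variable {𝕂 : Type*} [RCLike 𝕂] {a b c : 𝕂}

theorem one_le_radius_ordinaryHypergeometricSeries (𝔸 : Type*) [NormedDivisionRing 𝔸]
    [NormedAlgebra 𝕂 𝔸] (hc : ∀ n : ℕ, c ≠ -(n : 𝕂)) :
    1 ≤ (ordinaryHypergeometricSeries 𝔸 a b c).radius := by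
  by_cases ha : ∃ k : ℕ, a = -(k : 𝕂)
  · obtain ⟨k, rfl⟩ := ha
    simp [ordinaryHypergeometric_radius_top_of_neg_nat₁]
  by_cases hb : ∃ k : ℕ, b = -(k : 𝕂)
  · obtain ⟨k, rfl⟩ := hb
    simp [ordinaryHypergeometric_radius_top_of_neg_nat₂]
  push Not at ha hb
  refine (ordinaryHypergeometricSeries_radius_eq_one 𝔸 a b c fun n ↦ ?_).ge
  exact ⟨fun h ↦ ha n (neg_eq_iff_eq_neg.mp h.symm), fun h ↦ hb n (neg_eq_iff_eq_neg.mp h.symm),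
    fun h ↦ hc n (neg_eq_iff_eq_neg.mp h.symm)⟩

theorem hasFPowerSeriesOnBall_ordinaryHypergeometric (hc : ∀ n : ℕ, c ≠ -(n : 𝕂)) :
    HasFPowerSeriesOnBall (₂F₁ a b c) (ordinaryHypergeometricSeries 𝕂 a b c) 0 1 :=
  ((ordinaryHypergeometricSeries 𝕂 a b c).hasFPowerSeriesOnBall
    (one_pos.trans_le (one_le_radius_ordinaryHypergeometricSeries 𝕂 hc))).mono one_pos
    (one_le_radius_ordinaryHypergeometricSeries 𝕂 hc)

theorem ordinaryHypergeometricCoefficient_succ (n : ℕ) :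
    ordinaryHypergeometricCoefficient a b c (n + 1)
      = (a + n) * (b + n) / ((n + 1) * (c + n)) * ordinaryHypergeometricCoefficient a b c n := by
  simp only [ordinaryHypergeometricCoefficient, ascPochhammer_succ_eval, Nat.factorial_succ,
    Nat.cast_mul, div_eq_mul_inv, mul_inv]
  push_cast
  ring

theorem ordinaryHypergeometricCoefficient_sub_one_succ (n : ℕ) :
    ordinaryHypergeometricCoefficient (a - 1) (b - 1) (c - 1) (n + 1)
      = (a - 1) * (b - 1) / ((n + 1) * (c - 1)) * ordinaryHypergeometricCoefficient a b c n := by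
  simp only [ordinaryHypergeometricCoefficient, ascPochhammer_succ_left_eval, sub_add_cancel,
    Nat.factorial_succ, Nat.cast_mul, div_eq_mul_inv, mul_inv]
  push_cast
  ring

theorem ordinaryHypergeometricCoefficient_contiguous (hc : ∀ n : ℕ, c - 1 ≠ -(n : 𝕂)) (n : ℕ) :
    (n + c) * ordinaryHypergeometricCoefficient a b c (n + 1)
        - (n + a + b - 1) * ordinaryHypergeometricCoefficient a b c n
      = (c - 1) * ordinaryHypergeometricCoefficient (a - 1) (b - 1) (c - 1) (n + 1) := by
  have : c + n ≠ 0 := fun h ↦ ne_neg_natCast_of_sub_one_ne hc n (eq_neg_of_add_eq_zero_left h)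
  have : c - 1 ≠ 0 := by simpa using hc 0
  rw [ordinaryHypergeometricCoefficient_succ, ordinaryHypergeometricCoefficient_sub_one_succ]
  field_simp
  ring

theorem ordinaryHypergeometric_contiguous (hc : ∀ n : ℕ, c - 1 ≠ -(n : 𝕂)) {x : 𝕂}
    (hx : x ∈ Metric.eball 0 1) :
    (1 - x) * (x * deriv (₂F₁ a b c) x) + (c - 1 - (a + b - 1) * x) * ₂F₁ a b c x
      = (c - 1) * ₂F₁ (a - 1) (b - 1) (c - 1) x := by
  have hF := hasFPowerSeriesOnBall_ordinaryHypergeometric (a := a) (b := b)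
    (ne_neg_natCast_of_sub_one_ne hc)
  have hf := hF.hasSum_ofScalars hx
  have hθf := hF.hasSum_mul_deriv_ofScalars hx
  have hg := (hasFPowerSeriesOnBall_ordinaryHypergeometric (a := a - 1) (b := b - 1)
    hc).hasSum_ofScalars hx
  have := (hθf.add (hf.mul_left (c - 1))).sub_eq_of_shift
    ((hθf.add (hf.mul_left (a + b - 1))).mul_left x) (hg.mul_left (c - 1))
    (by simp [ordinaryHypergeometricCoefficient]) fun n ↦ by
      push_cast
      linear_combination
        -x ^ (n + 1) * ordinaryHypergeometricCoefficient_contiguous (a := a) (b := b) hc n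
  linear_combination this

end Hypergeometric

theorem stmt_14_general (a b c u : ℂ)
    (hc' : ∀ n : ℕ, c + u - 1 ≠ -(n : ℂ)) :
    ∀ x : ℂ, ‖x‖ < 1 →
      x * deriv (fun y => (1 - y) ^ (a + u) * gauss2F1 (a + u) (b + u) (c + u) y) x
        + (-((b - c) / (1 - x)) + b - 1 + u)
          * ((1 - x) ^ (a + u) * gauss2F1 (a + u) (b + u) (c + u) x)
      = (c + u - 1) * (1 - x) ^ (a + u - 1)
          * gauss2F1 (a + u - 1) (b + u - 1) (c + u - 1) x := by
  intro x hx
  simp only [gauss2F1_eq_ordinaryHypergeometric]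
  have hx' : x ∈ Metric.eball 0 1 := by
    rwa [mem_eball_zero_iff, ← ofReal_norm, ENNReal.ofReal_lt_one]
  have hslit : 1 - x ∈ Complex.slitPlane := Or.inl <| by
    simpa using (Complex.re_le_norm x).trans_lt hx
  have h1x : 1 - x ≠ 0 := Complex.slitPlane_ne_zero hslit
  have hpow : HasDerivAt (fun y ↦ (1 - y) ^ (a + u)) ((a + u) * (1 - x) ^ (a + u - 1) * -1) x :=
    ((hasDerivAt_id x).const_sub 1).cpow_const hslit
  have hF := ((hasFPowerSeriesOnBall_ordinaryHypergeometric (a := a + u) (b := b + u)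
    (ne_neg_natCast_of_sub_one_ne hc')).analyticAt_of_mem hx').differentiableAt
  have hsplit : (1 - x) ^ (a + u) = (1 - x) ^ (a + u - 1) * (1 - x) := by
    conv_lhs => rw [← sub_add_cancel (a + u) 1, Complex.cpow_add _ _ h1x, Complex.cpow_one]
  rw [deriv_fun_mul hpow.differentiableAt hF, hpow.deriv, hsplit]
  have hdiv : (b - c) / (1 - x) * (1 - x) = b - c := div_mul_cancel₀ _ h1x
  have key := ordinaryHypergeometric_contiguous (a := a + u) (b := b + u) (c := c + u) hc' hx'
  linear_combination (1 - x) ^ (a + u - 1) * (key - ₂F₁ (a + u) (b + u) (c + u) x * hdiv)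

/-- Shift operator relation (3.10) of the paper, with
G(x) = (1−x)^{a+u} F(a+u,b+u;c+u;x) (principal branch):
xG′(x) + (−(b−c)/(1−x) + b−1+u)G(x) = (c+u−1)(1−x)^{a+u−1}F(a+u−1,b+u−1;c+u−1;x). -/
theorem stmt_14 (a b c u : ℂ)
    (hc : ∀ n : ℕ, c + u ≠ -(n : ℂ)) (hc' : ∀ n : ℕ, c + u - 1 ≠ -(n : ℂ)) :
    ∀ x : ℂ, ‖x‖ < 1 →
      x * deriv (fun y => (1 - y) ^ (a + u) * gauss2F1 (a + u) (b + u) (c + u) y) x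
        + (-((b - c) / (1 - x)) + b - 1 + u)
          * ((1 - x) ^ (a + u) * gauss2F1 (a + u) (b + u) (c + u) x)
      = (c + u - 1) * (1 - x) ^ (a + u - 1)
          * gauss2F1 (a + u - 1) (b + u - 1) (c + u - 1) x :=
  stmt_14_general a b c u hc'
end
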